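/- arXiv:math/0511334 — 9 statements merged into one kernel-verified Lean document; each statement's English description precedes it below -/
import Mathlib

section
/- Complementation of a determinantal measure: let n : ℕ and let p be a determinantal probability measure on the subsets of Fin n with kernel K : Matrix (Fin n) (Fin n) ℂ. Then the complementary probability mass function pᶜ, defined by pᶜ S = p (Sᶜ) (complement inside Fin n), is a determinantal probability measure with kernel 1 - K (the identity matrix minus K). -/
open scoped ComplexConjugate

/-- Determinant of the principal submatrix of `K` on the finset `S`. -/
noncomputable def detMinor {n : ℕ} (K : Matrix (Fin n) (Fin n) ℂ) (S : Finset (Fin n)) : ℂ :=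
  (Matrix.of fun a b : Fin S.card =>
    K (S.orderEmbOfFin rfl a) (S.orderEmbOfFin rfl b)).det

/-- `p` is a determinantal probability measure on subsets of `Fin n` with kernel `K`. -/
def IsDeterminantal {n : ℕ} (K : Matrix (Fin n) (Fin n) ℂ)
    (p : PMF (Finset (Fin n))) : Prop :=
  ∀ S : Finset (Fin n),
    ∑ T ∈ Finset.univ.filter (fun T => S ⊆ T), ((p T).toReal : ℂ) = detMinor K S

section Aux

open Finset Matrix

private lemma det_submatrix_eq_detMinor' {n : ℕ} (K : Matrix (Fin n) (Fin n) ℂ)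
    {ι : Type*} [Fintype ι] [DecidableEq ι] (f : ι → Fin n) (hf : Function.Injective f) :
    (K.submatrix f f).det = detMinor K (Finset.univ.image f) := by
  set A := Finset.univ.image f with hA
  have hcard : A.card = Fintype.card ι := by
    rw [hA, Finset.card_image_of_injective _ hf, Finset.card_univ]
  have hmem : ∀ i, f i ∈ A := fun i => Finset.mem_image_of_mem f (Finset.mem_univ i)
  set f' : ι → A := fun i => (⟨f i, hmem i⟩ : A) with hf'def
  have hf' : Function.Bijective f' := by
    rw [Fintype.bijective_iff_injective_and_card]
    refine ⟨fun a b h => hf (congrArg Subtype.val h), ?_⟩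
    rw [Fintype.card_coe, hcard]
  set σ : ι ≃ Fin A.card :=
    (Equiv.ofBijective f' hf').trans (A.orderIsoOfFin rfl).toEquiv.symm with hσ
  have key : ∀ i, A.orderEmbOfFin rfl (σ i) = f i := by
    intro i
    have h1 : A.orderIsoOfFin rfl (σ i) = f' i := by
      simp [hσ]
    have h2 := Finset.coe_orderIsoOfFin_apply A rfl (σ i)
    rw [h1] at h2
    rw [← h2]
  have hsub : K.submatrix f f =
      (K.submatrix (A.orderEmbOfFin rfl) (A.orderEmbOfFin rfl)).submatrix σ σ := by
    ext a b
    simp [Matrix.submatrix_apply, key]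
  rw [hsub, Matrix.det_submatrix_equiv_self]
  rfl

private lemma det_piecewise' {m : ℕ} (M : Matrix (Fin m) (Fin m) ℂ) (s : Finset (Fin m)) :
    (Matrix.of (s.piecewise (-M) (1 : Matrix (Fin m) (Fin m) ℂ))).det
      = (-1 : ℂ) ^ s.card *
        (M.submatrix (fun i : {i // i ∈ s} => (i : Fin m)) (fun i : {i // i ∈ s} => (i : Fin m))).det := by
  classical
  set e : {i // i ∈ s} ⊕ {i // i ∉ s} ≃ Fin m := Equiv.sumCompl (· ∈ s) with he
  rw [← Matrix.det_submatrix_equiv_self e]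
  have hblocks : (Matrix.of (s.piecewise (-M) (1 : Matrix (Fin m) (Fin m) ℂ))).submatrix e e =
      Matrix.fromBlocks
        ((-M).submatrix (fun i : {i // i ∈ s} => (i : Fin m)) (fun i : {i // i ∈ s} => (i : Fin m)))
        ((-M).submatrix (fun i : {i // i ∈ s} => (i : Fin m)) (fun i : {i // i ∉ s} => (i : Fin m)))
        0 1 := by
    ext i j
    cases i with
    | inl i =>
      cases j with
      | inl j => simp [he, Finset.piecewise, i.2]
      | inr j => simp [he, Finset.piecewise, i.2]
    | inr i =>
      cases j with
      | inl j =>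
        have hij : (i : Fin m) ≠ (j : Fin m) := fun h => i.2 (h ▸ j.2)
        simp [he, Finset.piecewise, i.2, Matrix.one_apply, hij]
      | inr j =>
        simp [he, Finset.piecewise, i.2, Matrix.one_apply,
          Subtype.ext_iff]
  rw [hblocks, Matrix.det_fromBlocks_zero₂₁, Matrix.det_one, mul_one]
  have : ((-M).submatrix (fun i : {i // i ∈ s} => (i : Fin m)) (fun i : {i // i ∈ s} => (i : Fin m)))
      = -(M.submatrix (fun i : {i // i ∈ s} => (i : Fin m)) (fun i : {i // i ∈ s} => (i : Fin m))) := by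
    ext a b; simp
  rw [this, Matrix.det_neg, Fintype.card_coe]

private lemma det_one_sub' {m : ℕ} (M : Matrix (Fin m) (Fin m) ℂ) :
    (1 - M).det = ∑ s : Finset (Fin m), (-1 : ℂ) ^ s.card *
        (M.submatrix (fun i : {i // i ∈ s} => (i : Fin m)) (fun i : {i // i ∈ s} => (i : Fin m))).det := by
  have h : (1 - M) = (-M) + 1 := sub_eq_neg_add 1 M
  rw [h]
  have hadd := (Matrix.detRowAlternating :
      (Fin m → ℂ) [⋀^Fin m]→ₗ[ℂ] ℂ).toMultilinearMap.map_add_univ (-M) (1 : Matrix (Fin m) (Fin m) ℂ)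
  have : ((-M) + 1 : Matrix (Fin m) (Fin m) ℂ).det
      = ∑ s : Finset (Fin m), (Matrix.of (s.piecewise (-M) (1 : Matrix (Fin m) (Fin m) ℂ))).det := hadd
  rw [this]
  exact Finset.sum_congr rfl fun s _ => det_piecewise' M s

private lemma detMinor_one_sub {n : ℕ} (K : Matrix (Fin n) (Fin n) ℂ) (S : Finset (Fin n)) :
    detMinor (1 - K) S = ∑ A ∈ S.powerset, (-1 : ℂ) ^ A.card * detMinor K A := by
  classical
  set e := S.orderEmbOfFin rfl with he
  set M : Matrix (Fin S.card) (Fin S.card) ℂ := Matrix.of fun a b => K (e a) (e b) with hM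
  have h1 : detMinor (1 - K) S = (1 - M).det := by
    unfold detMinor
    congr 1
    ext a b
    by_cases hab : a = b
    · subst hab; simp [hM, Matrix.one_apply]; rfl
    · have : e a ≠ e b := fun h => hab (e.injective h)
      simp [hM, Matrix.one_apply, hab, this]; rfl
  rw [h1, det_one_sub']
  refine Finset.sum_bij (fun s _ => s.image e) ?_ ?_ ?_ ?_
  · intro s _
    rw [Finset.mem_powerset]
    intro x hx
    rcases Finset.mem_image.1 hx with ⟨i, _, rfl⟩
    exact S.orderEmbOfFin_mem rfl i
  · intro s _ t _ h
    exact Finset.image_injective e.injective h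
  · intro A hA
    rw [Finset.mem_powerset] at hA
    refine ⟨Finset.univ.filter (fun i => e i ∈ A), Finset.mem_univ _, ?_⟩
    ext x
    simp only [Finset.mem_image, Finset.mem_filter, Finset.mem_univ, true_and]
    constructor
    · rintro ⟨i, hi, rfl⟩; exact hi
    · intro hx
      have hxS : x ∈ S := hA hx
      have : x ∈ Set.range e := by rw [he, Finset.range_orderEmbOfFin]; exact hxS
      rcases this with ⟨i, rfl⟩
      exact ⟨i, hx, rfl⟩
  · intro s _
    have hcard : (s.image e).card = s.card := Finset.card_image_of_injective _ e.injective
    rw [hcard]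
    congr 1
    have h2 : (M.submatrix (fun i : {i // i ∈ s} => (i : Fin S.card))
        (fun i : {i // i ∈ s} => (i : Fin S.card)))
        = K.submatrix (fun i : {i // i ∈ s} => e i) (fun i : {i // i ∈ s} => e i) := rfl
    rw [h2, det_submatrix_eq_detMinor' K _ (fun a b h => Subtype.ext (e.injective h))]
    congr 1
    rw [Finset.univ_eq_attach]
    have : (fun i : {i // i ∈ s} => e i) = e ∘ Subtype.val := rfl
    rw [this, ← Finset.image_image, Finset.attach_image_val]

private lemma map_compl_apply {n : ℕ} (p : PMF (Finset (Fin n))) (T : Finset (Fin n)) :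
    (p.map fun S => Sᶜ) T = p Tᶜ := by
  rw [PMF.map_apply]
  rw [tsum_eq_single Tᶜ]
  · simp
  · intro b hb
    rw [if_neg]
    intro h
    exact hb (by rw [h, compl_compl])

private lemma prob_sum_eq {n : ℕ} (p : PMF (Finset (Fin n))) (S : Finset (Fin n)) :
    ∑ T ∈ Finset.univ.filter (fun T => S ⊆ T), (((p.map fun S => Sᶜ) T).toReal : ℂ)
      = ∑ U ∈ Finset.univ.filter (fun U => S ∩ U = ∅), ((p U).toReal : ℂ) := by
  refine Finset.sum_bij (fun T _ => Tᶜ) ?_ ?_ ?_ ?_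
  · intro T hT
    rw [Finset.mem_filter] at hT ⊢
    refine ⟨Finset.mem_univ _, ?_⟩
    rw [Finset.eq_empty_iff_forall_notMem]
    intro a ha
    rw [Finset.mem_inter, Finset.mem_compl] at ha
    exact ha.2 (hT.2 ha.1)
  · intro a _ b _ h
    have := congrArg (·ᶜ) h
    simpa [compl_compl] using this
  · intro U hU
    rw [Finset.mem_filter] at hU
    refine ⟨Uᶜ, ?_, by simp⟩
    rw [Finset.mem_filter]
    refine ⟨Finset.mem_univ _, ?_⟩
    intro a ha
    rw [Finset.mem_compl]
    intro haU
    have : a ∈ S ∩ U := Finset.mem_inter.2 ⟨ha, haU⟩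
    rw [hU.2] at this
    exact absurd this (Finset.notMem_empty a)
  · intro T _
    rw [map_compl_apply]

private lemma incl_excl {n : ℕ} (p : PMF (Finset (Fin n))) (S : Finset (Fin n)) :
    ∑ U ∈ Finset.univ.filter (fun U => S ∩ U = ∅), ((p U).toReal : ℂ)
      = ∑ A ∈ S.powerset, (-1 : ℂ) ^ A.card *
          ∑ T ∈ Finset.univ.filter (fun T => A ⊆ T), ((p T).toReal : ℂ) := by
  classical
  symm
  have key : ∀ T : Finset (Fin n),
      (∑ A ∈ (S ∩ T).powerset, (-1 : ℂ) ^ A.card) = if S ∩ T = ∅ then 1 else 0 := by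
    intro T
    have hz := Finset.sum_powerset_neg_one_pow_card (α := Fin n) (x := S ∩ T)
    have : ((∑ m ∈ (S ∩ T).powerset, (-1 : ℤ) ^ m.card : ℤ) : ℂ)
        = ∑ A ∈ (S ∩ T).powerset, (-1 : ℂ) ^ A.card := by push_cast; rfl
    rw [← this, hz]
    split <;> simp
  calc ∑ A ∈ S.powerset, (-1 : ℂ) ^ A.card *
          ∑ T ∈ Finset.univ.filter (fun T => A ⊆ T), ((p T).toReal : ℂ)
      = ∑ A ∈ S.powerset, ∑ T : Finset (Fin n),
          (if A ⊆ T then (-1 : ℂ) ^ A.card * ((p T).toReal : ℂ) else 0) := by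
        refine Finset.sum_congr rfl fun A _ => ?_
        rw [Finset.mul_sum, Finset.sum_filter]
    _ = ∑ T : Finset (Fin n), ∑ A ∈ S.powerset,
          (if A ⊆ T then (-1 : ℂ) ^ A.card * ((p T).toReal : ℂ) else 0) := Finset.sum_comm
    _ = ∑ T : Finset (Fin n), (if S ∩ T = ∅ then 1 else 0) * ((p T).toReal : ℂ) := by
        refine Finset.sum_congr rfl fun T _ => ?_
        rw [← key T, Finset.sum_mul]
        rw [← Finset.sum_filter]
        refine (Finset.sum_bij (fun A _ => A) ?_ ?_ ?_ ?_).symm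
        · intro A hA
          rw [Finset.mem_powerset, Finset.subset_inter_iff] at hA
          rw [Finset.mem_filter, Finset.mem_powerset]
          exact ⟨hA.1, hA.2⟩
        · intro a _ b _ h; exact h
        · intro A hA
          rw [Finset.mem_filter, Finset.mem_powerset] at hA
          exact ⟨A, Finset.mem_powerset.2 (Finset.subset_inter_iff.2 ⟨hA.1, hA.2⟩), rfl⟩
        · intro A _; rfl
    _ = ∑ U ∈ Finset.univ.filter (fun U => S ∩ U = ∅), ((p U).toReal : ℂ) := by
        rw [Finset.sum_filter]
        refine Finset.sum_congr rfl fun T _ => ?_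
        split <;> simp

end Aux

theorem complement_determinantal {n : ℕ} (K : Matrix (Fin n) (Fin n) ℂ)
    (p : PMF (Finset (Fin n))) (hp : IsDeterminantal K p) :
    IsDeterminantal (1 - K) (p.map fun S => Sᶜ) := by
  intro S
  rw [prob_sum_eq, incl_excl, detMinor_one_sub]
  exact Finset.sum_congr rfl fun A _ => by rw [hp A]
end

section
/- Existence of determinantal measures on finite sets: for every n : ℕ and every Hermitian matrix K : Matrix (Fin n) (Fin n) ℂ such that K is positive semidefinite and 1 - K is positive semidefinite, there exists a determinantal probability measure on the subsets of Fin n with kernel K. -/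
open scoped ComplexConjugate

section DetAux

open Matrix Finset
open scoped ComplexOrder

variable {n : ℕ}


noncomputable def mmat (K : Matrix (Fin n) (Fin n) ℂ) (d : Fin n → ℂ) (V W : Finset (Fin n)) :
    Matrix (Fin n) (Fin n) ℂ :=
  Matrix.of fun i j =>
    if i ∈ V then (if i = j then 1 else 0)
    else if j ∈ V then 0
    else K i j + (if i = j ∧ i ∈ W then d i else 0)

lemma mmat_apply (K : Matrix (Fin n) (Fin n) ℂ) (d : Fin n → ℂ) (V W : Finset (Fin n)) (i j) :
    mmat K d V W i j =
      if i ∈ V then (if i = j then 1 else 0)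
      else if j ∈ V then 0
      else K i j + (if i = j ∧ i ∈ W then d i else 0) := rfl

example (K : Matrix (Fin n) (Fin n) ℂ) (d : Fin n → ℂ) {a : Fin n} {V W : Finset (Fin n)}
    (haV : a ∉ V) (haW : a ∉ W) :
    mmat K d V Wᶜ = (mmat K d V (insert a W)ᶜ).updateCol a
      ((fun i => mmat K d V (insert a W)ᶜ i a) + Pi.single a (d a)) := by
  funext i j
  rw [Matrix.updateCol_apply]
  by_cases hj : j = a <;> by_cases hi : i = a <;> by_cases hiV : i ∈ V <;> by_cases hjV : j ∈ V <;>
    by_cases hij : i = j <;>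
    simp_all [mmat_apply, Finset.mem_compl, Finset.mem_insert, Pi.single_apply]

lemma det_clear (N : Matrix (Fin n) (Fin n) ℂ) (a : Fin n) :
    (N.updateCol a (Pi.single a 1)).det =
      ((N.updateCol a (Pi.single a 1)).updateRow a (Pi.single a 1)).det := by
  set N₁ := N.updateCol a (Pi.single a 1) with hN₁
  have hfun : N₁ a = Pi.single a (1:ℂ) + (fun j => if j = a then 0 else N₁ a j) := by
    funext j
    by_cases h : j = a
    · subst h
      simp [hN₁, Matrix.updateCol_apply]
    · simp [h, Pi.single_eq_of_ne h]
  have h1 : N₁.det = (N₁.updateRow a (Pi.single a (1:ℂ) + fun j => if j = a then 0 else N₁ a j)).det := by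
    rw [← hfun, Matrix.updateRow_eq_self]
  rw [h1, Matrix.det_updateRow_add]
  have hz : (N₁.updateRow a fun j => if j = a then 0 else N₁ a j).det = 0 := by
    apply Matrix.det_eq_zero_of_column_eq_zero a
    intro i
    by_cases h : i = a
    · subst h; simp [Matrix.updateRow_apply]
    · simp [Matrix.updateRow_apply, h, hN₁, Matrix.updateCol_apply, Pi.single_eq_of_ne h]
  rw [hz, add_zero]

lemma key (K : Matrix (Fin n) (Fin n) ℂ) (d : Fin n → ℂ) {a : Fin n} {V W : Finset (Fin n)}
    (haV : a ∉ V) (haW : a ∉ W) :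
    (mmat K d V Wᶜ).det =
      (mmat K d V (insert a W)ᶜ).det + d a * (mmat K d (insert a V) (insert a W)ᶜ).det := by
  set N := mmat K d V (insert a W)ᶜ with hN
  have h1 : mmat K d V Wᶜ = N.updateCol a ((fun i => N i a) + Pi.single a (d a)) := by
    funext i j
    rw [Matrix.updateCol_apply]
    by_cases hj : j = a <;> by_cases hi : i = a <;> by_cases hiV : i ∈ V <;> by_cases hjV : j ∈ V <;>
      by_cases hij : i = j <;>
      simp_all [hN, mmat_apply, Finset.mem_compl, Finset.mem_insert, Pi.single_apply]
  rw [h1, Matrix.det_updateCol_add, Matrix.updateCol_eq_self]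
  congr 1
  have h2 : Pi.single a (d a) = d a • (Pi.single a 1 : Fin n → ℂ) := by
    funext i
    by_cases h : i = a
    · subst h; simp
    · simp [Pi.single_eq_of_ne h]
  rw [h2, Matrix.det_updateCol_smul, det_clear]
  have h3 : (N.updateCol a (Pi.single a 1)).updateRow a (Pi.single a 1)
      = mmat K d (insert a V) (insert a W)ᶜ := by
    funext i j
    rw [Matrix.updateRow_apply]
    by_cases hj : j = a <;> by_cases hi : i = a <;> by_cases hiV : i ∈ V <;> by_cases hjV : j ∈ V <;>
    by_cases hij : i = j <;>
    simp_all [hN, mmat_apply, Matrix.updateCol_apply, Finset.mem_compl, Finset.mem_insert,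
      Pi.single_apply]
  rw [h3]

lemma lemX (K : Matrix (Fin n) (Fin n) ℂ) (d : Fin n → ℂ) (W : Finset (Fin n)) :
    (K + Matrix.diagonal d).det = ∑ V ∈ W.powerset, (∏ i ∈ V, d i) * (mmat K d V Wᶜ).det := by
  induction W using Finset.induction with
  | empty =>
    have h : K + Matrix.diagonal d = mmat K d ∅ (∅ : Finset (Fin n))ᶜ := by
      funext i j
      by_cases hij : i = j <;>
        simp [mmat_apply, Matrix.diagonal_apply, Matrix.add_apply, hij]
    simp [h]
  | insert _ _ ha ih =>
    rename_i a W'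
    rw [Finset.sum_powerset_insert ha, ih]
    rw [← Finset.sum_add_distrib]
    apply Finset.sum_congr rfl
    intro V hV
    have haV : a ∉ V := fun h => ha (Finset.mem_powerset.mp hV h)
    rw [key K d haV ha, Finset.prod_insert haV]
    ring

noncomputable def Hm (K : Matrix (Fin n) (Fin n) ℂ) (V : Finset (Fin n)) : ℂ :=
  (mmat K 0 V ∅).det

noncomputable def DD (K : Matrix (Fin n) (Fin n) ℂ) (T : Finset (Fin n)) : ℂ :=
  (-1)^(Tᶜ.card) * ∑ V ∈ Tᶜ.powerset, (-1)^V.card * Hm K V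

lemma sum_pow_neg_one (x : Finset (Fin n)) :
    (∑ m ∈ x.powerset, (-1:ℂ)^m.card) = if x = ∅ then 1 else 0 := by
  have h := Finset.sum_powerset_neg_one_pow_card (x := x)
  have : (∑ m ∈ x.powerset, (-1:ℂ)^m.card) = (((∑ m ∈ x.powerset, (-1:ℤ)^m.card) : ℤ) : ℂ) := by
    push_cast; rfl
  rw [this, h]
  split <;> simp

lemma innerAltSum (A V : Finset (Fin n)) (hV : V ⊆ A) :
    (∑ U ∈ A.powerset, if V ⊆ U then (-1:ℂ)^U.card else 0)
      = (-1:ℂ)^V.card * (if V = A then 1 else 0) := by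
  rw [Finset.sum_ite, Finset.sum_const_zero, add_zero]
  have hbij : ∑ U ∈ A.powerset.filter (fun U => V ⊆ U), (-1:ℂ)^U.card
      = ∑ R ∈ (A \ V).powerset, (-1:ℂ)^(V ∪ R).card := by
    apply Finset.sum_nbij' (fun U => U \ V) (fun R => V ∪ R)
    · intro U hU
      simp only [Finset.mem_filter, Finset.mem_powerset] at hU
      exact Finset.mem_powerset.mpr (Finset.sdiff_subset_sdiff hU.1 Finset.Subset.rfl)
    · intro R hR
      simp only [Finset.mem_powerset] at hR
      refine Finset.mem_filter.mpr ⟨Finset.mem_powerset.mpr ?_, Finset.subset_union_left⟩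
      exact Finset.union_subset hV (hR.trans (Finset.sdiff_subset))
    · intro U hU
      simp only [Finset.mem_filter, Finset.mem_powerset] at hU
      exact Finset.union_sdiff_of_subset hU.2
    · intro R hR
      simp only [Finset.mem_powerset] at hR
      exact Finset.union_sdiff_cancel_left (Finset.disjoint_of_subset_right hR Finset.sdiff_disjoint.symm)
    · intro U hU
      simp only [Finset.mem_filter, Finset.mem_powerset] at hU
      rw [Finset.union_sdiff_of_subset hU.2]
  rw [hbij]
  have hcard : ∀ R ∈ (A \ V).powerset, (-1:ℂ)^(V ∪ R).card = (-1:ℂ)^V.card * (-1:ℂ)^R.card := by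
    intro R hR
    simp only [Finset.mem_powerset] at hR
    rw [Finset.card_union_of_disjoint
      (Finset.disjoint_of_subset_right hR Finset.sdiff_disjoint.symm), pow_add]
  rw [Finset.sum_congr rfl hcard, ← Finset.mul_sum, sum_pow_neg_one]
  congr 1
  have : A \ V = ∅ ↔ V = A := by
    rw [Finset.sdiff_eq_empty_iff_subset]
    exact ⟨fun h => Finset.Subset.antisymm hV h, fun h => h ▸ Finset.Subset.rfl⟩
  simp [this]

lemma double_powerset (A : Finset (Fin n)) (g : Finset (Fin n) → ℂ) :
    (∑ U ∈ A.powerset, (-1:ℂ)^U.card * ∑ V ∈ U.powerset, (-1:ℂ)^V.card * g V) = g A := by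
  have step1 : ∀ U ∈ A.powerset,
      (-1:ℂ)^U.card * ∑ V ∈ U.powerset, (-1:ℂ)^V.card * g V
        = ∑ V ∈ A.powerset, (if V ⊆ U then (-1:ℂ)^U.card * ((-1:ℂ)^V.card * g V) else 0) := by
    intro U hU
    simp only [Finset.mem_powerset] at hU
    rw [Finset.mul_sum, Finset.sum_ite, Finset.sum_const_zero, add_zero]
    have : A.powerset.filter (fun V => V ⊆ U) = U.powerset := by
      ext V
      simp only [Finset.mem_filter, Finset.mem_powerset]
      exact ⟨fun h => h.2, fun h => ⟨h.trans hU, h⟩⟩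
    rw [this]
  rw [Finset.sum_congr rfl step1, Finset.sum_comm]
  have step2 : ∀ V ∈ A.powerset,
      (∑ U ∈ A.powerset, if V ⊆ U then (-1:ℂ)^U.card * ((-1:ℂ)^V.card * g V) else 0)
        = (if V = A then g A else 0) := by
    intro V hV
    simp only [Finset.mem_powerset] at hV
    have : ∀ U, (if V ⊆ U then (-1:ℂ)^U.card * ((-1:ℂ)^V.card * g V) else 0)
        = (if V ⊆ U then (-1:ℂ)^U.card else 0) * ((-1:ℂ)^V.card * g V) := by
      intro U; split <;> simp
    simp only [this]
    rw [← Finset.sum_mul, innerAltSum A V hV]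
    split
    · rename_i h
      subst h
      rw [mul_one, ← mul_assoc, ← pow_add, ← two_mul, pow_mul]
      norm_num
    · rename_i h
      simp [h]
  rw [Finset.sum_congr rfl step2, Finset.sum_ite_eq' A.powerset A (fun _ => g A),
    if_pos (Finset.mem_powerset.mpr Finset.Subset.rfl)]

lemma sum_DD (K : Matrix (Fin n) (Fin n) ℂ) (S : Finset (Fin n)) :
    ∑ T ∈ Finset.univ.filter (fun T => S ⊆ T), DD K T = Hm K Sᶜ := by
  have h1 : ∑ T ∈ Finset.univ.filter (fun T => S ⊆ T), DD K T
      = ∑ U ∈ Sᶜ.powerset, DD K Uᶜ := by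
    apply Finset.sum_nbij' (fun T => Tᶜ) (fun U => Uᶜ)
    · intro T hT
      simp only [Finset.mem_filter, Finset.mem_univ, true_and] at hT
      exact Finset.mem_powerset.mpr (Finset.compl_subset_compl.mpr hT)
    · intro U hU
      simp only [Finset.mem_powerset] at hU
      simp only [Finset.mem_filter, Finset.mem_univ, true_and]
      have := Finset.compl_subset_compl.mpr hU
      simpa using this
    · intro T _; exact compl_compl T
    · intro U _; exact compl_compl U
    · intro T _; rw [compl_compl]
  rw [h1]
  have h2 : ∀ U ∈ Sᶜ.powerset, DD K Uᶜ
      = (-1:ℂ)^U.card * ∑ V ∈ U.powerset, (-1:ℂ)^V.card * Hm K V := by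
    intro U _
    rw [DD, compl_compl]
  rw [Finset.sum_congr rfl h2, double_powerset]

lemma DD_det (K : Matrix (Fin n) (Fin n) ℂ) (T : Finset (Fin n)) :
    DD K T = (-1:ℂ)^(Tᶜ.card) *
      (K + Matrix.diagonal (fun i => if i ∈ Tᶜ then (-1:ℂ) else 0)).det := by
  set d : Fin n → ℂ := fun i => if i ∈ Tᶜ then (-1:ℂ) else 0 with hd
  rw [DD]
  congr 1
  rw [lemX K d Finset.univ]
  have hcompl : (Finset.univ : Finset (Fin n))ᶜ = ∅ := by simp
  have hmm : ∀ V : Finset (Fin n), mmat K d V (Finset.univ : Finset (Fin n))ᶜ = mmat K 0 V ∅ := by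
    intro V
    rw [hcompl]
    funext i j
    simp [mmat_apply]
  have hprod : ∀ V : Finset (Fin n), (∏ i ∈ V, d i) = if V ⊆ Tᶜ then (-1:ℂ)^V.card else 0 := by
    intro V
    split
    · rename_i h
      rw [Finset.prod_congr rfl (fun i hi => if_pos (h hi) : ∀ i ∈ V, d i = -1)]
      simp
    · rename_i h
      obtain ⟨i, hiV, hiT⟩ := Finset.not_subset.mp h
      exact Finset.prod_eq_zero hiV (if_neg hiT)
  have : ∀ V ∈ (Finset.univ : Finset (Fin n)).powerset,
      (∏ i ∈ V, d i) * (mmat K d V (Finset.univ : Finset (Fin n))ᶜ).det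
        = if V ⊆ Tᶜ then (-1:ℂ)^V.card * Hm K V else 0 := by
    intro V _
    rw [hprod, hmm]
    split <;> simp [Hm]
  rw [Finset.sum_congr rfl this, Finset.sum_ite, Finset.sum_const_zero, add_zero]
  have : (Finset.univ : Finset (Fin n)).powerset.filter (fun V => V ⊆ Tᶜ) = Tᶜ.powerset := by
    ext V
    simp [Finset.mem_powerset]
  rw [this]


lemma psd_det_nonneg {m : Type} [Fintype m] [DecidableEq m] {M : Matrix m m ℂ} (h : M.PosSemidef) :
    0 ≤ M.det := by
  rw [h.isHermitian.det_eq_prod_eigenvalues]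
  have h2 : (0:ℝ) ≤ ∏ i, h.1.eigenvalues i := Finset.prod_nonneg fun i _ => h.eigenvalues_nonneg i
  calc (0:ℂ) = ((0:ℝ):ℂ) := by norm_num
    _ ≤ ((∏ i, h.1.eigenvalues i : ℝ) : ℂ) := by exact_mod_cast h2
    _ = _ := by push_cast; rfl

lemma det_block_nonneg {p q : ℕ} (A : Matrix (Fin p) (Fin p) ℂ) (B : Matrix (Fin p) (Fin q) ℂ)
    (C : Matrix (Fin q) (Fin q) ℂ) (hA : A.PosSemidef) (hC : C.PosSemidef) :
    0 ≤ (Matrix.fromBlocks A B (-Bᴴ) C).det := by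
  set g : ℝ → ℂ := fun t =>
    (Matrix.fromBlocks (A + Matrix.diagonal fun _ => (t:ℂ)) B (-Bᴴ) C).det with hg
  have main : ∀ t : ℝ, 0 < t → 0 ≤ g t := by
    intro t ht
    have hdiag : (Matrix.diagonal fun _ : Fin p => (t:ℂ)).PosDef :=
      Matrix.posDef_diagonal_iff.mpr fun i => Complex.zero_lt_real.mpr ht
    have hPD : (A + Matrix.diagonal fun _ => (t:ℂ)).PosDef :=
      Matrix.PosDef.posSemidef_add hA hdiag
    haveI := Matrix.invertibleOfIsUnitDet _ hPD.det_pos.ne'.isUnit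
    rw [hg]
    simp only []
    rw [Matrix.det_fromBlocks₁₁]
    have h2 : C - (-Bᴴ) * ⅟(A + Matrix.diagonal fun _ => (t:ℂ)) * B
        = C + Bᴴ * (A + Matrix.diagonal fun _ => (t:ℂ))⁻¹ * B := by
      rw [invOf_eq_nonsing_inv, Matrix.neg_mul, Matrix.neg_mul, sub_neg_eq_add]
    rw [h2]
    exact mul_nonneg (psd_det_nonneg hPD.posSemidef)
      (psd_det_nonneg (hC.add ((hPD.inv.posSemidef).conjTranspose_mul_mul_same B)))
  have hcont : Continuous g := by
    apply Continuous.matrix_det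
    apply Continuous.matrix_fromBlocks
    · exact continuous_const.add
        ((continuous_pi fun _ => Complex.continuous_ofReal).matrix_diagonal)
    · exact continuous_const
    · exact continuous_const
    · exact continuous_const
  have h0 : g 0 = (Matrix.fromBlocks A B (-Bᴴ) C).det := by
    rw [hg]
    norm_num
  have htend : Filter.Tendsto g (nhdsWithin 0 (Set.Ioi 0)) (nhds (g 0)) :=
    (hcont.tendsto 0).mono_left nhdsWithin_le_nhds
  have hev : ∀ᶠ t in nhdsWithin (0:ℝ) (Set.Ioi 0), 0 ≤ g t :=
    eventually_nhdsWithin_of_forall fun t ht => main t ht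
  have hre : 0 ≤ (g 0).re := by
    have h1 : Filter.Tendsto (fun t => (g t).re) (nhdsWithin 0 (Set.Ioi 0)) (nhds ((g 0).re)) :=
      (Complex.continuous_re.tendsto _).comp htend
    refine ge_of_tendsto h1 (hev.mono fun t ht => ?_)
    simpa using (Complex.le_def.mp ht).1
  have him : (g 0).im = 0 := by
    have h1 : Filter.Tendsto (fun t => (g t).im) (nhdsWithin 0 (Set.Ioi 0)) (nhds ((g 0).im)) :=
      (Complex.continuous_im.tendsto _).comp htend
    have heq : (fun t => (g t).im) =ᶠ[nhdsWithin (0:ℝ) (Set.Ioi 0)] (fun _ => (0:ℝ)) :=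
      hev.mono fun t ht => by simpa using ((Complex.le_def.mp ht).2).symm
    have h2 : Filter.Tendsto (fun t => (g t).im) (nhdsWithin 0 (Set.Ioi 0)) (nhds 0) :=
      Filter.Tendsto.congr' heq.symm tendsto_const_nhds
    exact tendsto_nhds_unique h1 h2
  rw [← h0]
  rw [Complex.le_def]
  constructor
  · simpa using hre
  · simpa using him.symm

noncomputable def esum (S : Finset (Fin n)) : Fin S.card ⊕ Fin Sᶜ.card ≃ Fin n :=
  ((S.orderIsoOfFin rfl).toEquiv.sumCongr ((Sᶜ).orderIsoOfFin rfl).toEquiv).trans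
    (((Equiv.refl _).sumCongr (Equiv.subtypeEquivRight (fun x => Finset.mem_compl))).trans
      (Equiv.sumCompl (· ∈ S)))

lemma esum_inl (S : Finset (Fin n)) (a : Fin S.card) :
    esum S (Sum.inl a) = S.orderEmbOfFin rfl a := by
  simp [esum, Finset.coe_orderIsoOfFin_apply]

lemma esum_inr (S : Finset (Fin n)) (b : Fin Sᶜ.card) :
    esum S (Sum.inr b) = Sᶜ.orderEmbOfFin rfl b := by
  simp [esum, Finset.coe_orderIsoOfFin_apply]

lemma esum_inl_mem (S : Finset (Fin n)) (a : Fin S.card) : esum S (Sum.inl a) ∈ S := by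
  rw [esum_inl]; exact Finset.orderEmbOfFin_mem _ _ _

lemma esum_inr_mem (S : Finset (Fin n)) (b : Fin Sᶜ.card) : esum S (Sum.inr b) ∈ Sᶜ := by
  rw [esum_inr]; exact Finset.orderEmbOfFin_mem _ _ _

lemma Hm_eq_detMinor (K : Matrix (Fin n) (Fin n) ℂ) (S : Finset (Fin n)) :
    (mmat K 0 Sᶜ ∅).det = detMinor K S := by
  rw [← Matrix.det_submatrix_equiv_self (esum S)]
  have hsub : (mmat K 0 Sᶜ ∅).submatrix (esum S) (esum S) =
      Matrix.fromBlocks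
        (Matrix.of fun a b : Fin S.card =>
          K (S.orderEmbOfFin rfl a) (S.orderEmbOfFin rfl b)) 0 0 1 := by
    funext i j
    cases i with
    | inl a =>
      cases j with
      | inl b =>
        have hi := esum_inl_mem S a
        have hj := esum_inl_mem S b
        have hi' : esum S (Sum.inl a) ∉ Sᶜ := by simpa using hi
        have hj' : esum S (Sum.inl b) ∉ Sᶜ := by simpa using hj
        simp [Matrix.submatrix_apply, mmat_apply, hi', hj', esum_inl]
      | inr b =>
        have hi : esum S (Sum.inl a) ∉ Sᶜ := by simpa using esum_inl_mem S a
        have hj := esum_inr_mem S b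
        simp [Matrix.submatrix_apply, mmat_apply, hi, hj]
    | inr a =>
      cases j with
      | inl b =>
        have hi := esum_inr_mem S a
        have hne : esum S (Sum.inr a) ≠ esum S (Sum.inl b) := by
          intro h
          exact Sum.inr_ne_inl ((esum S).injective h)
        simp [Matrix.submatrix_apply, mmat_apply, hi, hne]
      | inr b =>
        have hi := esum_inr_mem S a
        have : esum S (Sum.inr a) = esum S (Sum.inr b) ↔ a = b := by
          constructor
          · intro h; exact Sum.inr.inj ((esum S).injective h)
          · intro h; rw [h]
        simp [Matrix.submatrix_apply, mmat_apply, hi, this, Matrix.one_apply]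
  rw [hsub, Matrix.det_fromBlocks_zero₂₁, Matrix.det_one, mul_one, detMinor]

lemma neg_one_block_det {k l : ℕ} :
    ((-1:ℂ))^l = (Matrix.fromBlocks (1 : Matrix (Fin k) (Fin k) ℂ) 0 0
      (-1 : Matrix (Fin l) (Fin l) ℂ)).det := by
  rw [Matrix.det_fromBlocks_zero₂₁, Matrix.det_one, one_mul]
  have : (-1 : Matrix (Fin l) (Fin l) ℂ) = -(1 : Matrix (Fin l) (Fin l) ℂ) := rfl
  rw [this, Matrix.det_neg, Matrix.det_one, mul_one, Fintype.card_fin]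

lemma DD_blocks (K : Matrix (Fin n) (Fin n) ℂ) (hK : K.IsHermitian) (T : Finset (Fin n)) :
    ((-1:ℂ))^(Tᶜ.card) * (K + Matrix.diagonal (fun i => if i ∈ Tᶜ then (-1:ℂ) else 0)).det
      = (Matrix.fromBlocks
          (K.submatrix (T.orderEmbOfFin rfl) (T.orderEmbOfFin rfl))
          (Matrix.of fun a b => K (T.orderEmbOfFin rfl a) (Tᶜ.orderEmbOfFin rfl b))
          (-(Matrix.of fun a b => K (T.orderEmbOfFin rfl a) (Tᶜ.orderEmbOfFin rfl b))ᴴ)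
          ((1 : Matrix (Fin Tᶜ.card) (Fin Tᶜ.card) ℂ)
            - K.submatrix (Tᶜ.orderEmbOfFin rfl) (Tᶜ.orderEmbOfFin rfl))).det := by
  set d : Fin n → ℂ := fun i => if i ∈ Tᶜ then (-1:ℂ) else 0 with hd
  set Ab := K.submatrix (T.orderEmbOfFin rfl) (T.orderEmbOfFin rfl) with hAb
  set Bb := (Matrix.of fun a b => K (T.orderEmbOfFin rfl a) (Tᶜ.orderEmbOfFin rfl b)) with hBb
  set Cb := (Matrix.of fun a b => K (Tᶜ.orderEmbOfFin rfl a) (T.orderEmbOfFin rfl b)) with hCb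
  set Db := K.submatrix (Tᶜ.orderEmbOfFin rfl) (Tᶜ.orderEmbOfFin rfl) with hDb
  have hsub : (K + Matrix.diagonal d).submatrix (esum T) (esum T)
      = Matrix.fromBlocks Ab Bb Cb (Db - 1) := by
    funext i j
    have hmem : ∀ x : Fin T.card ⊕ Fin Tᶜ.card, (∀ a, x = Sum.inl a → esum T x ∈ T)
        := by rintro x a rfl; exact esum_inl_mem T a
    cases i with
    | inl a =>
      cases j with
      | inl b =>
        have hi : esum T (Sum.inl a) ∉ Tᶜ := by simpa using esum_inl_mem T a
        by_cases hij : esum T (Sum.inl a) = esum T (Sum.inl b) <;>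
          simp [Matrix.submatrix_apply, Matrix.add_apply, Matrix.diagonal_apply, hij, hd, hi,
            esum_inl, hAb] <;> simp [← esum_inl, hij]
      | inr b =>
        have hne : esum T (Sum.inl a) ≠ esum T (Sum.inr b) := fun h =>
          Sum.inl_ne_inr ((esum T).injective h)
        have hne' : (T.orderEmbOfFin rfl) a ≠ (Tᶜ.orderEmbOfFin rfl) b := by
          rw [← esum_inl, ← esum_inr]; exact hne
        simp [Matrix.submatrix_apply, Matrix.add_apply, Matrix.diagonal_apply, hne', hBb, esum_inl,
          esum_inr]
    | inr a =>
      cases j with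
      | inl b =>
        have hne : esum T (Sum.inr a) ≠ esum T (Sum.inl b) := fun h =>
          Sum.inr_ne_inl ((esum T).injective h)
        have hne' : (Tᶜ.orderEmbOfFin rfl) a ≠ (T.orderEmbOfFin rfl) b := by
          rw [← esum_inr T a, ← esum_inl T b]; exact hne
        simp [Matrix.submatrix_apply, Matrix.add_apply, Matrix.diagonal_apply, hne', hCb, esum_inl,
          esum_inr]
      | inr b =>
        have hi : esum T (Sum.inr a) ∈ Tᶜ := esum_inr_mem T a
        have hinj : esum T (Sum.inr a) = esum T (Sum.inr b) ↔ a = b :=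
          ⟨fun h => Sum.inr.inj ((esum T).injective h), fun h => by rw [h]⟩
        by_cases hab : a = b
        · subst hab
          have hnT : (Tᶜ.orderEmbOfFin rfl) a ∉ T :=
            Finset.mem_compl.mp (Finset.orderEmbOfFin_mem Tᶜ rfl a)
          simp [Matrix.submatrix_apply, Matrix.add_apply, Matrix.diagonal_apply, hd, hi, hDb,
            Matrix.sub_apply, Matrix.one_apply, esum_inr, hnT]
          ring
        · have : esum T (Sum.inr a) ≠ esum T (Sum.inr b) := fun h => hab (hinj.mp h)
          simp [Matrix.submatrix_apply, Matrix.add_apply, Matrix.diagonal_apply, this, hDb,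
            Matrix.sub_apply, Matrix.one_apply, hab, esum_inr]
  have hdet : (K + Matrix.diagonal d).det = (Matrix.fromBlocks Ab Bb Cb (Db - 1)).det := by
    rw [← hsub, Matrix.det_submatrix_equiv_self]
  rw [hdet, neg_one_block_det (k := T.card) (l := Tᶜ.card), ← Matrix.det_mul,
    Matrix.fromBlocks_multiply]
  have hCB : Cb = Bbᴴ := by
    funext a b
    rw [hCb, hBb]
    simp only [Matrix.conjTranspose_apply, Matrix.of_apply]
    exact (hK.apply _ _).symm
  congr 1
  rw [hCB]
  simp [Matrix.neg_mul, Matrix.one_mul, Matrix.zero_mul, neg_sub]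


lemma Hm_detMinor (K : Matrix (Fin n) (Fin n) ℂ) (S : Finset (Fin n)) :
    Hm K Sᶜ = detMinor K S := Hm_eq_detMinor K S

end DetAux

open scoped ComplexOrder in
theorem determinantal_exists {n : ℕ} (K : Matrix (Fin n) (Fin n) ℂ)
    (hK : K.IsHermitian) (hpos : K.PosSemidef) (hcon : (1 - K).PosSemidef) :
    ∃ p : PMF (Finset (Fin n)), IsDeterminantal K p := by
  classical
  have hDD : ∀ T : Finset (Fin n), 0 ≤ DD K T := by
    intro T
    rw [DD_det, DD_blocks K hK T]
    have h1mD : (1 : Matrix (Fin Tᶜ.card) (Fin Tᶜ.card) ℂ)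
        - K.submatrix (Tᶜ.orderEmbOfFin rfl) (Tᶜ.orderEmbOfFin rfl)
        = (1 - K).submatrix (Tᶜ.orderEmbOfFin rfl) (Tᶜ.orderEmbOfFin rfl) := by
      funext a b
      by_cases hab : a = b
      · subst hab; simp [Matrix.sub_apply, Matrix.one_apply]
      · have hne : (Tᶜ.orderEmbOfFin rfl) a ≠ (Tᶜ.orderEmbOfFin rfl) b := fun h =>
          hab ((Tᶜ.orderEmbOfFin rfl).injective h)
        simp [Matrix.sub_apply, Matrix.one_apply, hab, hne]
    rw [h1mD]
    exact det_block_nonneg _ _ _ (hpos.submatrix _) (hcon.submatrix _)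
  have hre : ∀ T : Finset (Fin n), (((DD K T).re : ℝ) : ℂ) = DD K T := by
    intro T
    have h := Complex.le_def.mp (hDD T)
    apply Complex.ext
    · simp
    · simpa using h.2
  have hre0 : ∀ T : Finset (Fin n), 0 ≤ (DD K T).re := fun T => by
    simpa using (Complex.le_def.mp (hDD T)).1
  have hminor_empty : detMinor K ∅ = 1 := by
    haveI : IsEmpty (Fin ((∅ : Finset (Fin n)).card)) := by
      rw [Finset.card_empty]; infer_instance
    rw [detMinor]
    exact Matrix.det_isEmpty
  have hsum1C : ∑ T : Finset (Fin n), DD K T = 1 := by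
    have h := sum_DD K ∅
    have hfilter : Finset.univ.filter (fun T : Finset (Fin n) => ∅ ⊆ T) = Finset.univ := by
      apply Finset.filter_true_of_mem
      intro T _
      exact Finset.empty_subset T
    rw [hfilter] at h
    rw [h, Hm_detMinor, hminor_empty]
  have hsum1R : ∑ T : Finset (Fin n), (DD K T).re = 1 := by
    have h := congrArg Complex.re hsum1C
    simpa [Complex.re_sum] using h
  have hfsum : ∑ T : Finset (Fin n), ENNReal.ofReal ((DD K T).re) = 1 := by
    rw [← ENNReal.ofReal_sum_of_nonneg (fun T _ => hre0 T), hsum1R, ENNReal.ofReal_one]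
  refine ⟨PMF.ofFintype (fun T => ENNReal.ofReal ((DD K T).re)) hfsum, ?_⟩
  intro S
  have hterm : ∀ T : Finset (Fin n),
      (((PMF.ofFintype (fun T => ENNReal.ofReal ((DD K T).re)) hfsum T).toReal : ℝ) : ℂ)
        = DD K T := by
    intro T
    rw [PMF.ofFintype_apply, ENNReal.toReal_ofReal (hre0 T)]
    exact hre T
  rw [Finset.sum_congr rfl (fun T _ => hterm T), sum_DD, Hm_detMinor]
end

section
/- Proposition 1 (Fock-basis diagonal of the quasifree density operator gives a determinantal measure, stated concretely): Let n : ℕ, let λ : Fin n → ℝ with 0 ≤ λ j ≤ 1 for all j, let v : Fin n → (EuclideanSpace ℂ (Fin n)) be an orthonormal basis, and let K be the Hermitian matrix of the operator with eigenvectors v j and eigenvalues λ j, i.e. K i j = ∑ k, (λ k : ℂ) * ⟪v k, (Pi.single i 1)⟫ * conj ⟪v k, (Pi.single j 1)⟫ in the standard basis. Let w : Fin n → (EuclideanSpace ℂ (Fin n)) be any orthonormal basis. Define, for S : Finset (Fin n), p S = ∑ over T : Finset (Fin n) with T.card = S.card of (∏ k ∈ T, λ k) * (∏ k ∉ T, (1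 - λ k)) * ‖det M(T,S)‖², where M(T,S) is the S.card × S.card matrix with (a,b) entry ⟪v (T.orderEmbOfFin rfl a), w (S.orderEmbOfFin rfl b)⟫. Then p is a probability mass function on Finset (Fin n) and is a determinantal probability measure with kernel 𝒦, the matrix of the operator K in the basis w, given by 𝒦 i j = ∑ k, (λ k : ℂ) * conj ⟪v k, w i⟫ * ⟪v k, w j⟫. -/
open scoped ComplexConjugate

open scoped InnerProductSpace


open Finset Matrix

namespace DPP

variable {R : Type*} [CommRing R]

lemma sum_orderEmbOfFin {α M : Type*} [LinearOrder α] [AddCommMonoid M] (S : Finset α)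
    {k : ℕ} (h : S.card = k) (f : α → M) :
    ∑ i : Fin k, f (S.orderEmbOfFin h i) = ∑ a ∈ S, f a := by
  rw [← Finset.sum_attach S f]
  exact Fintype.sum_equiv (S.orderIsoOfFin h).toEquiv _ _
    (fun i => congrArg f (S.coe_orderIsoOfFin_apply h i).symm)

lemma prod_orderEmbOfFin {α M : Type*} [LinearOrder α] [CommMonoid M] (S : Finset α)
    {k : ℕ} (h : S.card = k) (f : α → M) :
    ∏ i : Fin k, f (S.orderEmbOfFin h i) = ∏ a ∈ S, f a := by
  rw [← Finset.prod_attach S f]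
  exact Fintype.prod_equiv (S.orderIsoOfFin h).toEquiv _ _
    (fun i => congrArg f (S.coe_orderIsoOfFin_apply h i).symm)

lemma image_orderEmbOfFin {α : Type*} [LinearOrder α] [DecidableEq α] (S : Finset α)
    {k : ℕ} (h : S.card = k) :
    Finset.image (S.orderEmbOfFin h) Finset.univ = S := by
  apply Finset.eq_of_subset_of_card_le
  · intro x hx
    obtain ⟨i, -, rfl⟩ := Finset.mem_image.mp hx
    exact S.orderEmbOfFin_mem h i
  · rw [Finset.card_image_of_injective _ (S.orderEmbOfFin h).injective, card_univ,
      Fintype.card_fin, h]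

lemma orderEmbOfFin_cast {α : Type*} [LinearOrder α] (S : Finset α) {k l : ℕ}
    (h1 : S.card = k) (h2 : S.card = l) (a : Fin k) :
    S.orderEmbOfFin h1 a = S.orderEmbOfFin h2 (Fin.cast (h1.symm.trans h2) a) := by
  have : (fun a : Fin k => S.orderEmbOfFin h2 (Fin.cast (h1.symm.trans h2) a))
      = S.orderEmbOfFin h1 :=
    Finset.orderEmbOfFin_unique h1 (fun i => S.orderEmbOfFin_mem h2 _)
      (fun a b hab => (S.orderEmbOfFin h2).strictMono
        (by simp only [Fin.lt_def, Fin.coe_cast]; exact Fin.lt_def.mp hab))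
  exact (congrFun this a).symm


lemma image_orderEmbOfFin_comp {α : Type*} [LinearOrder α] [DecidableEq α] (S : Finset α)
    {k : ℕ} (h : S.card = k) (σ : Equiv.Perm (Fin k)) :
    Finset.image (⇑(S.orderEmbOfFin h) ∘ ⇑σ) Finset.univ = S := by
  rw [← Finset.image_image, Finset.image_univ_of_surjective σ.surjective,
    image_orderEmbOfFin]

/-- **Cauchy–Binet formula**. -/
theorem det_mul_eq_sum_minors {m n : ℕ} (X : Matrix (Fin m) (Fin n) R)
    (Y : Matrix (Fin n) (Fin m) R) :
    (X * Y).det = ∑ S : Finset (Fin n), if h : S.card = m then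
      (X.submatrix id (S.orderEmbOfFin h)).det * (Y.submatrix (S.orderEmbOfFin h) id).det
    else 0 := by
  classical
  have step1 : (X * Y).det
      = ∑ p : Fin m → Fin n, (X.submatrix id p).det * ∏ i, Y (p i) i := by
    simp only [Matrix.det_apply', Matrix.mul_apply, Finset.prod_univ_sum, Finset.mul_sum,
      Fintype.piFinset_univ]
    rw [Finset.sum_comm]
    refine Finset.sum_congr rfl fun p _ => ?_
    rw [Finset.sum_mul]
    refine Finset.sum_congr rfl fun σ _ => ?_
    rw [Finset.prod_mul_distrib]
    simp only [Matrix.submatrix_apply, id_eq]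
    ring
  have step2 : (∑ p : Fin m → Fin n, (X.submatrix id p).det * ∏ i, Y (p i) i)
      = ∑ p ∈ univ.filter (fun p : Fin m → Fin n => Function.Injective p),
          (X.submatrix id p).det * ∏ i, Y (p i) i := by
    symm
    apply Finset.sum_subset (Finset.filter_subset _ _)
    intro p _ hp
    simp only [Finset.mem_filter, Finset.mem_univ, true_and] at hp
    obtain ⟨i, j, heq, hne⟩ := Function.not_injective_iff.mp hp
    rw [Matrix.det_zero_of_column_eq hne (fun k => by simp [Matrix.submatrix_apply, heq]),
      zero_mul]
  have step3 : ∀ S : Finset (Fin n), (if h : S.card = m then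
        (X.submatrix id (S.orderEmbOfFin h)).det * (Y.submatrix (S.orderEmbOfFin h) id).det
      else 0)
      = ∑ σ : Equiv.Perm (Fin m), if h : S.card = m then
          (X.submatrix id (S.orderEmbOfFin h ∘ σ)).det
            * ∏ i, Y ((S.orderEmbOfFin h ∘ σ) i) i
        else 0 := by
    intro S
    by_cases h : S.card = m
    · simp only [dif_pos h]
      have e1 : ∀ σ : Equiv.Perm (Fin m),
          (X.submatrix id (S.orderEmbOfFin h ∘ σ)).det
            = (Equiv.Perm.sign σ : R) * (X.submatrix id (S.orderEmbOfFin h)).det := by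
        intro σ
        have : X.submatrix id (S.orderEmbOfFin h ∘ σ)
            = (X.submatrix id (S.orderEmbOfFin h)).submatrix id σ := by
          ext a b; simp [Matrix.submatrix_apply]
        rw [this, Matrix.det_permute']
      simp only [e1]
      rw [Matrix.det_apply' (Y.submatrix (S.orderEmbOfFin h) id), Finset.mul_sum]
      refine Finset.sum_congr rfl fun σ _ => ?_
      simp only [Matrix.submatrix_apply, id_eq, Function.comp_apply]
      ring
    · simp [dif_neg h]
  rw [step1, step2]
  calc
    ∑ p ∈ univ.filter (fun p : Fin m → Fin n => Function.Injective p),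
        (X.submatrix id p).det * ∏ i, Y (p i) i
      = ∑ x ∈ (univ.filter fun S : Finset (Fin n) => S.card = m).sigma
          (fun _ => (univ : Finset (Equiv.Perm (Fin m)))),
          if h : x.1.card = m then
            (X.submatrix id (x.1.orderEmbOfFin h ∘ x.2)).det
              * ∏ i, Y ((x.1.orderEmbOfFin h ∘ x.2) i) i
          else 0 := by
        refine (Finset.sum_bij
          (i := fun (x : Σ _ : Finset (Fin n), Equiv.Perm (Fin m)) hx =>
            x.1.orderEmbOfFin (Finset.mem_filter.mp (Finset.mem_sigma.mp hx).1).2 ∘ x.2)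
          ?_ ?_ ?_ ?_).symm
        · intro x hx
          simp only [Finset.mem_filter, Finset.mem_univ, true_and]
          exact (x.1.orderEmbOfFin _).injective.comp x.2.injective
        · rintro ⟨S₁, σ₁⟩ hx₁ ⟨S₂, σ₂⟩ hx₂ heq
          have h₁ := (Finset.mem_filter.mp (Finset.mem_sigma.mp hx₁).1).2
          have h₂ := (Finset.mem_filter.mp (Finset.mem_sigma.mp hx₂).1).2
          have himg : S₁ = S₂ := by
            have := congrArg (fun f => Finset.image f Finset.univ) heq
            simpa [image_orderEmbOfFin_comp] using this
          subst himg
          have hσ : σ₁ = σ₂ := by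
            apply Equiv.ext
            intro i
            exact (S₁.orderEmbOfFin h₁).injective (congrFun heq i)
          rw [hσ]
        · intro p hp
          simp only [Finset.mem_filter, Finset.mem_univ, true_and] at hp
          have hmem : ∀ i, p i ∈ Finset.image p Finset.univ :=
            fun i => Finset.mem_image_of_mem p (Finset.mem_univ i)
          have hcard : (Finset.image p Finset.univ).card = m := by
            rw [Finset.card_image_of_injective _ hp, card_univ, Fintype.card_fin]
          set S : Finset (Fin n) := Finset.image p Finset.univ with hS
          have hg : Function.Injective (fun i : Fin m =>
              (S.orderIsoOfFin hcard).symm ⟨p i, hmem i⟩) := by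
            intro i j hij
            apply hp
            have := congrArg (fun z => ((S.orderIsoOfFin hcard) z : Fin n)) hij
            simpa using this
          refine ⟨⟨S, Equiv.ofBijective _ (Finite.injective_iff_bijective.mp hg)⟩, ?_, ?_⟩
          · exact Finset.mem_sigma.mpr ⟨Finset.mem_filter.mpr ⟨Finset.mem_univ _, hcard⟩,
              Finset.mem_univ _⟩
          · funext i
            simp only [Function.comp_apply, Equiv.ofBijective_apply]
            rw [← S.coe_orderIsoOfFin_apply hcard]
            simp
        · intro x hx
          have h := (Finset.mem_filter.mp (Finset.mem_sigma.mp hx).1).2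
          rw [dif_pos h]
    _ = ∑ S ∈ univ.filter (fun S : Finset (Fin n) => S.card = m),
          ∑ σ : Equiv.Perm (Fin m), if h : S.card = m then
            (X.submatrix id (S.orderEmbOfFin h ∘ σ)).det
              * ∏ i, Y ((S.orderEmbOfFin h ∘ σ) i) i
          else 0 := by
        rw [Finset.sum_sigma]
    _ = ∑ S : Finset (Fin n), ∑ σ : Equiv.Perm (Fin m), if h : S.card = m then
            (X.submatrix id (S.orderEmbOfFin h ∘ σ)).det
              * ∏ i, Y ((S.orderEmbOfFin h ∘ σ) i) i
          else 0 := by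
        apply Finset.sum_subset (Finset.filter_subset _ _)
        intro S _ hS
        simp only [Finset.mem_filter, Finset.mem_univ, true_and] at hS
        simp [dif_neg hS]
    _ = ∑ S : Finset (Fin n), if h : S.card = m then
          (X.submatrix id (S.orderEmbOfFin h)).det * (Y.submatrix (S.orderEmbOfFin h) id).det
        else 0 := by
        exact Finset.sum_congr rfl fun S _ => (step3 S).symm

end DPP


open Finset Matrix

namespace DPP2

variable {R : Type*} [CommRing R] {ι : Type*} [Fintype ι] [DecidableEq ι]

/-- Determinant of a principal minor, indexed by a subtype. -/
def sdet (N : Matrix ι ι R) (C : Finset ι) : R :=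
  (N.submatrix (fun i : {x // x ∈ C} => (i : ι)) (fun j : {x // x ∈ C} => (j : ι))).det

lemma det_ite_rows (f g : ι → ι → R) (D : Finset ι) (M₀ : Matrix ι ι R) :
    (Matrix.of fun i j => if i ∈ D then f i j + g i j else M₀ i j).det
      = ∑ C ∈ D.powerset, (Matrix.of fun i j =>
          if i ∈ C then f i j else if i ∈ D then g i j else M₀ i j).det := by
  induction D using Finset.induction_on generalizing M₀ with
  | empty => simp
  | @insert a D' ha ih =>
    have hL : (Matrix.of fun i j => if i ∈ insert a D' then f i j + g i j else M₀ i j)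
        = (Matrix.of fun i j => if i ∈ D' then f i j + g i j else M₀ i j).updateRow a
            (f a + g a) := by
      ext i j
      by_cases hia : i = a
      · subst hia; simp [Matrix.updateRow_apply]
      · simp [Matrix.updateRow_apply, hia, Finset.mem_insert]
    rw [hL, Matrix.det_updateRow_add]
    have hf : (Matrix.of fun i j => if i ∈ D' then f i j + g i j else M₀ i j).updateRow a (f a)
        = Matrix.of fun i j => if i ∈ D' then f i j + g i j
            else (M₀.updateRow a (f a)) i j := by
      ext i j
      by_cases hia : i = a
      · subst hia; simp [Matrix.updateRow_apply, ha]
      · simp [Matrix.updateRow_apply, hia]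
    have hg : (Matrix.of fun i j => if i ∈ D' then f i j + g i j else M₀ i j).updateRow a (g a)
        = Matrix.of fun i j => if i ∈ D' then f i j + g i j
            else (M₀.updateRow a (g a)) i j := by
      ext i j
      by_cases hia : i = a
      · subst hia; simp [Matrix.updateRow_apply, ha]
      · simp [Matrix.updateRow_apply, hia]
    rw [hf, hg, ih (M₀.updateRow a (f a)),
      ih (M₀.updateRow a (g a)), Finset.sum_powerset_insert ha, add_comm]
    congr 1
    · -- g-branch gives the C ⊆ D' terms
      refine Finset.sum_congr rfl fun C hC => ?_
      have hCD := Finset.mem_powerset.mp hC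
      have haC : a ∉ C := fun h => ha (hCD h)
      congr 1
      ext i j
      by_cases hia : i = a
      · subst hia; simp [haC, ha, Matrix.updateRow_apply, Finset.mem_insert]
      · simp [Matrix.updateRow_apply, hia, Finset.mem_insert]
    · -- f-branch gives the insert a C terms
      refine Finset.sum_congr rfl fun C hC => ?_
      have hCD := Finset.mem_powerset.mp hC
      have haC : a ∉ C := fun h => ha (hCD h)
      congr 1
      ext i j
      by_cases hia : i = a
      · subst hia; simp [haC, ha, Matrix.updateRow_apply, Finset.mem_insert]
      · simp [Matrix.updateRow_apply, hia, Finset.mem_insert]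

lemma det_ite_id (N : Matrix ι ι R) (C : Finset ι) :
    (Matrix.of fun i j => if i ∈ C then N i j else if i = j then (1:R) else 0).det
      = sdet N C := by
  classical
  rw [← Matrix.det_submatrix_equiv_self (Equiv.sumCompl (· ∈ C))]
  have hb : (Matrix.of fun i j =>
        if i ∈ C then N i j else if i = j then (1:R) else 0).submatrix
      (Equiv.sumCompl (· ∈ C)) (Equiv.sumCompl (· ∈ C))
      = Matrix.fromBlocks
          (N.submatrix (fun i : {x // x ∈ C} => (i : ι)) (fun j : {x // x ∈ C} => (j : ι)))
          (N.submatrix (fun i : {x // x ∈ C} => (i : ι)) (fun j : {x // ¬ x ∈ C} => (j : ι)))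
          0 1 := by
    ext i j
    rcases i with i | i <;> rcases j with j | j
    · simp [Matrix.submatrix_apply, i.2]
    · simp [Matrix.submatrix_apply, i.2]
    · have : (i : ι) ≠ (j : ι) := fun h => i.2 (h ▸ j.2)
      simp [Matrix.submatrix_apply, i.2, this]
    · by_cases hij : i = j
      · subst hij; simp [Matrix.submatrix_apply, i.2, Matrix.one_apply]
      · have : (i : ι) ≠ (j : ι) := fun h => hij (Subtype.ext h)
        simp [Matrix.submatrix_apply, i.2, this, Matrix.one_apply, hij]
  rw [hb, Matrix.det_fromBlocks_zero₂₁, Matrix.det_one, mul_one, sdet]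

lemma det_ite_padded (N : Matrix ι ι R) {B C : Finset ι} (hCB : C ⊆ B) :
    (Matrix.of fun i j => if i ∈ C then (if j ∈ B then N i j else 0)
        else if i = j then (1:R) else 0).det = sdet N C := by
  have h := det_ite_id (R := R) (Matrix.of fun i j => if j ∈ B then N i j else 0) C
  simp only [Matrix.of_apply] at h
  rw [h, sdet, sdet]
  congr 1
  ext i j
  simp [Matrix.submatrix_apply, hCB j.2]

lemma sdet_one_add (M : Matrix ι ι R) (B : Finset ι) :
    sdet (1 + M) B = ∑ C ∈ B.powerset, sdet M C := by
  have h1 : sdet (1 + M) B = (Matrix.of fun i j =>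
      if i ∈ B then (if j ∈ B then (1 + M) i j else 0)
      else if i = j then (1:R) else 0).det :=
    (det_ite_padded (1 + M) (Finset.Subset.refl B)).symm
  have h2 : (Matrix.of fun i j =>
        if i ∈ B then (if j ∈ B then (1 + M) i j else 0)
        else if i = j then (1:R) else 0)
      = Matrix.of fun i j =>
          if i ∈ B then (fun i j => if j ∈ B then M i j else 0) i j
              + (fun i j => if i = j then (1:R) else 0) i j
          else (Matrix.of fun i j => if i = j then (1:R) else 0) i j := by
    ext i j
    by_cases hi : i ∈ B
    · by_cases hj : j ∈ B
      · by_cases hij : i = j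
        · subst hij; simp [hi, Matrix.add_apply, Matrix.one_apply, add_comm]
        · simp [hi, hj, hij, Matrix.add_apply, Matrix.one_apply]
      · have hij : i ≠ j := fun h => hj (h ▸ hi)
        simp [hi, hj, hij]
    · simp [hi]
  rw [h1, h2, det_ite_rows]
  refine Finset.sum_congr rfl fun C hC => ?_
  have hCB := Finset.mem_powerset.mp hC
  rw [← det_ite_padded M hCB]
  congr 1
  ext i j
  by_cases hiC : i ∈ C
  · simp [hiC]
  · by_cases hiB : i ∈ B <;> simp [hiC, hiB]

lemma alt_sum_powerset (s : Finset ι) :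
    ∑ B ∈ s.powerset, (-1 : R) ^ B.card = if s = ∅ then 1 else 0 := by
  induction s using Finset.induction_on with
  | empty => simp
  | @insert a s ha ih =>
    rw [Finset.sum_powerset_insert ha]
    have h2 : ∑ B ∈ s.powerset, (-1:R)^(insert a B).card
        = - ∑ B ∈ s.powerset, (-1:R)^B.card := by
      rw [← Finset.sum_neg_distrib]
      refine Finset.sum_congr rfl fun B hB => ?_
      have haB : a ∉ B := fun h => ha (Finset.mem_powerset.mp hB h)
      rw [Finset.card_insert_of_notMem haB, pow_succ]
      ring
    rw [h2, add_neg_cancel, if_neg (Finset.insert_ne_empty a s)]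

lemma moebius (A : Finset ι) (x : Finset ι → R) :
    ∑ B ∈ A.powerset, (-1:R)^B.card * ∑ C ∈ B.powerset, (-1:R)^C.card * x C = x A := by
  simp_rw [Finset.mul_sum]
  rw [Finset.sum_comm' (s := A.powerset) (t := fun B => B.powerset) (t' := A.powerset)
    (s' := fun C => A.powerset.filter (fun B => C ⊆ B))
    (by
      intro B C
      simp only [Finset.mem_powerset, Finset.mem_filter]
      constructor
      · rintro ⟨h1, h2⟩; exact ⟨⟨h1, h2⟩, h2.trans h1⟩
      · rintro ⟨⟨h1, h2⟩, _⟩; exact ⟨h1, h2⟩)]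
  have inner : ∀ C ∈ A.powerset, ∑ B ∈ A.powerset.filter (fun B => C ⊆ B), (-1:R)^B.card
      = if C = A then (-1:R)^A.card else 0 := by
    intro C hC
    have hCA := Finset.mem_powerset.mp hC
    have hbij : ∑ B ∈ A.powerset.filter (fun B => C ⊆ B), (-1:R)^B.card
        = ∑ B' ∈ (A \ C).powerset, (-1:R)^(B' ∪ C).card := by
      apply Finset.sum_nbij' (i := fun B => B \ C) (j := fun B' => B' ∪ C)
      · intro B hB
        simp only [Finset.mem_filter, Finset.mem_powerset] at hB
        exact Finset.mem_powerset.mpr (Finset.sdiff_subset_sdiff hB.1 (Finset.Subset.refl C))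
      · intro B' hB'
        have h := Finset.mem_powerset.mp hB'
        refine Finset.mem_filter.mpr ⟨Finset.mem_powerset.mpr ?_, Finset.subset_union_right⟩
        exact Finset.union_subset (h.trans (Finset.sdiff_subset)) hCA
      · intro B hB
        simp only [Finset.mem_filter, Finset.mem_powerset] at hB
        exact Finset.sdiff_union_of_subset hB.2
      · intro B' hB'
        have h := Finset.mem_powerset.mp hB'
        exact Finset.union_sdiff_cancel_right
          (Finset.disjoint_of_subset_left h (Finset.sdiff_disjoint))
      · intro B hB
        simp only [Finset.mem_filter, Finset.mem_powerset] at hB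
        rw [Finset.sdiff_union_of_subset hB.2]
    rw [hbij]
    have hval : ∀ B' ∈ (A \ C).powerset, (-1:R)^(B' ∪ C).card
        = (-1:R)^C.card * (-1:R)^B'.card := by
      intro B' hB'
      have h := Finset.mem_powerset.mp hB'
      rw [Finset.card_union_of_disjoint
        (Finset.disjoint_of_subset_left h (Finset.sdiff_disjoint)), pow_add]
      ring
    rw [Finset.sum_congr rfl hval, ← Finset.mul_sum, alt_sum_powerset]
    by_cases hCeq : C = A
    · subst hCeq
      rw [if_pos rfl]
      simp
    · rw [if_neg hCeq, if_neg (fun h => hCeq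
        (Finset.Subset.antisymm hCA (Finset.sdiff_eq_empty_iff_subset.mp h))), mul_zero]
  calc ∑ C ∈ A.powerset, ∑ B ∈ A.powerset.filter (fun B => C ⊆ B),
          (-1:R)^B.card * ((-1:R)^C.card * x C)
      = ∑ C ∈ A.powerset, (if C = A then (-1:R)^A.card else 0) * ((-1:R)^C.card * x C) := by
        refine Finset.sum_congr rfl fun C hC => ?_
        rw [← Finset.sum_mul, inner C hC]
    _ = x A := by
        rw [Finset.sum_eq_single A]
        · rw [if_pos rfl, ← mul_assoc, ← pow_add]
          have : Even (A.card + A.card) := ⟨A.card, rfl⟩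
          rw [this.neg_one_pow, one_mul]
        · intro C _ hCne
          rw [if_neg hCne, zero_mul]
        · intro h
          exact absurd (Finset.mem_powerset.mpr (Finset.Subset.refl A)) h

lemma sdet_inv_alt (H : Matrix ι ι R) (A : Finset ι) :
    ∑ B ∈ A.powerset, (-1:R)^B.card * sdet (1 - H) B = sdet H A := by
  have h1 : ∀ B : Finset ι, sdet (1 - H) B = ∑ C ∈ B.powerset, (-1:R)^C.card * sdet H C := by
    intro B
    have hrw : (1 : Matrix ι ι R) - H = 1 + (-H) := sub_eq_add_neg 1 H
    rw [hrw, sdet_one_add]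
    refine Finset.sum_congr rfl fun C _ => ?_
    have : sdet (-H) C = ((-1:R) ^ C.card) * sdet H C := by
      rw [sdet, sdet]
      have hneg : (-H).submatrix (fun i : {x // x ∈ C} => (i : ι))
          (fun j : {x // x ∈ C} => (j : ι))
          = -(H.submatrix (fun i : {x // x ∈ C} => (i : ι))
              (fun j : {x // x ∈ C} => (j : ι))) := rfl
      rw [hneg, Matrix.det_neg, Fintype.card_coe]
    rw [this]
  simp_rw [h1]
  exact moebius A (fun C => sdet H C)

lemma incl_excl {q : Finset ι → R} {c : Finset ι → Prop} [DecidablePred c] (A : Finset ι) :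
    ∑ S ∈ univ.filter (fun S : Finset ι => A ⊆ S ∧ c S), q S
      = ∑ B ∈ A.powerset, (-1:R)^B.card *
          ∑ S ∈ univ.filter (fun S : Finset ι => Disjoint B S ∧ c S), q S := by
  simp_rw [Finset.sum_filter, Finset.mul_sum]
  rw [Finset.sum_comm]
  refine Finset.sum_congr rfl fun S _ => ?_
  by_cases hc : c S
  · simp only [hc, and_true]
    have hstep : ∀ B ∈ A.powerset, (-1:R)^B.card * (if Disjoint B S then q S else 0)
        = (if Disjoint B S then (-1:R)^B.card else 0) * q S := by
      intro B _; split_ifs <;> ring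
    rw [Finset.sum_congr rfl hstep, ← Finset.sum_mul]
    have hps : (∑ B ∈ A.powerset, if Disjoint B S then (-1:R)^B.card else 0)
        = ∑ B ∈ (A \ S).powerset, (-1:R)^B.card := by
      rw [← Finset.sum_filter]
      congr 1
      ext B
      simp only [Finset.mem_filter, Finset.mem_powerset, Finset.subset_sdiff]
    rw [hps, alt_sum_powerset]
    by_cases hAS : A ⊆ S
    · rw [if_pos hAS, if_pos (Finset.sdiff_eq_empty_iff_subset.mpr hAS), one_mul]
    · rw [if_neg hAS, if_neg (fun h => hAS (Finset.sdiff_eq_empty_iff_subset.mp h)), zero_mul]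
  · simp [hc]

lemma bernoulli_marginal (μ : ι → R) (Rs : Finset ι) :
    ∑ T ∈ univ.filter (fun T : Finset ι => Rs ⊆ T),
        (∏ k ∈ T, μ k) * (∏ k ∈ Tᶜ, (1 - μ k))
      = ∏ k ∈ Rs, μ k := by
  have h1 : ∑ T ∈ univ.filter (fun T : Finset ι => Rs ⊆ T),
        (∏ k ∈ T, μ k) * (∏ k ∈ Tᶜ, (1 - μ k))
      = ∑ t ∈ Rsᶜ.powerset, (∏ k ∈ Rs, μ k) *
          ((∏ k ∈ t, μ k) * (∏ k ∈ Rsᶜ \ t, (1 - μ k))) := by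
    apply Finset.sum_nbij' (i := fun T => T \ Rs) (j := fun t => t ∪ Rs)
    · intro T hT
      simp only [Finset.mem_filter, Finset.mem_univ, true_and] at hT
      refine Finset.mem_powerset.mpr fun x hx => ?_
      rw [Finset.mem_compl]
      exact (Finset.mem_sdiff.mp hx).2
    · intro t _
      exact Finset.mem_filter.mpr ⟨Finset.mem_univ _, Finset.subset_union_right⟩
    · intro T hT
      simp only [Finset.mem_filter, Finset.mem_univ, true_and] at hT
      exact Finset.sdiff_union_of_subset hT
    · intro t ht
      have h := Finset.mem_powerset.mp ht
      refine Finset.union_sdiff_cancel_right (Finset.disjoint_left.mpr fun x hx => ?_)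
      have := h hx
      rwa [Finset.mem_compl] at this
    · intro T hT
      simp only [Finset.mem_filter, Finset.mem_univ, true_and] at hT
      have hprod : ∏ k ∈ T, μ k = (∏ k ∈ Rs, μ k) * ∏ k ∈ T \ Rs, μ k := by
        rw [mul_comm, Finset.prod_sdiff hT]
      have hcompl : Tᶜ = Rsᶜ \ (T \ Rs) := by
        ext x
        simp only [Finset.mem_compl, Finset.mem_sdiff, not_and, not_not]
        constructor
        · intro hx
          exact ⟨fun hxR => hx (hT hxR), fun hxT => absurd hxT hx⟩
        · intro ⟨hx1, hx2⟩ hxT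
          exact hx1 (hx2 hxT)
      rw [hprod, hcompl]
      ring
  have h2 : ∑ t ∈ Rsᶜ.powerset, (∏ k ∈ t, μ k) * (∏ k ∈ Rsᶜ \ t, (1 - μ k)) = 1 := by
    rw [← Finset.prod_add]
    exact Finset.prod_eq_one fun _ _ => by ring
  rw [h1, ← Finset.mul_sum, h2, mul_one]

lemma sdet_eq {α : Type*} [LinearOrder α] [Fintype α] [DecidableEq α] (N : Matrix α α R) (C : Finset α) :
    sdet N C = (Matrix.of fun a b : Fin C.card =>
      N (C.orderEmbOfFin rfl a) (C.orderEmbOfFin rfl b)).det := by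
  rw [sdet, ← Matrix.det_submatrix_equiv_self (C.orderIsoOfFin rfl).toEquiv]
  congr 1

end DPP2

namespace DPP3

open Finset Matrix ComplexConjugate

variable {n : ℕ} (U : Matrix (Fin n) (Fin n) ℂ)

/-- The minor of `U` with rows `T` and columns `S` (zero if the sizes differ). -/
noncomputable def DU (T S : Finset (Fin n)) : ℂ :=
  if h : T.card = S.card then
    (Matrix.of fun a b : Fin S.card =>
      U (T.orderEmbOfFin h a) (S.orderEmbOfFin rfl b)).det
  else 0

/-- Gram matrix of the rows of `U` indexed by `T`. -/
noncomputable def gram (T : Finset (Fin n)) : Matrix (Fin n) (Fin n) ℂ :=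
  Matrix.of fun k l : Fin n =>
    ∑ a : Fin T.card, conj (U (T.orderEmbOfFin rfl a) k) * U (T.orderEmbOfFin rfl a) l

lemma sum_disjoint
    (hrow : ∀ k l, ∑ j, U k j * conj (U l j) = if k = l then (1:ℂ) else 0)
    (T B : Finset (Fin n)) :
    ∑ S ∈ univ.filter (fun S : Finset (Fin n) => Disjoint B S ∧ T.card = S.card),
        DU U T S * conj (DU U T S)
      = DPP2.sdet (1 - gram U T) B := by
  classical
  set emb := T.orderEmbOfFin rfl with hemb
  set X : Matrix (Fin T.card) (Fin n) ℂ :=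
    Matrix.of fun a k => if k ∈ B then 0 else U (emb a) k with hX
  set Y : Matrix (Fin n) (Fin T.card) ℂ :=
    Matrix.of fun k b => if k ∈ B then 0 else conj (U (emb b) k) with hY
  have hdet1 : (X * Y).det = DPP2.sdet (1 - gram U T) B := by
    set W : Matrix (Fin T.card) {x // x ∈ B} ℂ :=
      Matrix.of fun a k => U (emb a) (k : Fin n) with hW
    set W' : Matrix {x // x ∈ B} (Fin T.card) ℂ :=
      Matrix.of fun k b => conj (U (emb b) (k : Fin n)) with hW'
    have hXY : X * Y = 1 - W * W' := by
      ext a b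
      simp only [Matrix.mul_apply, Matrix.sub_apply, Matrix.one_apply, hX, hY,
        Matrix.of_apply]
      have split : ∀ k, ((if k ∈ B then 0 else U (emb a) k) *
            (if k ∈ B then 0 else conj (U (emb b) k)))
          = U (emb a) k * conj (U (emb b) k)
            - (if k ∈ B then U (emb a) k * conj (U (emb b) k) else 0) := by
        intro k; split_ifs <;> ring
      rw [Finset.sum_congr rfl (fun k _ => split k), Finset.sum_sub_distrib,
        hrow (emb a) (emb b)]
      congr 1
      · have hiff : emb a = emb b ↔ a = b :=
          ⟨fun h => (T.orderEmbOfFin rfl).injective h, fun h => congrArg emb h⟩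
        simp [hiff]
      · rw [Finset.sum_ite_mem, Finset.univ_inter, ← Finset.sum_coe_sort]
        simp [hW, hW', Matrix.mul_apply]
    rw [hXY, Matrix.det_one_sub_mul_comm, DPP2.sdet]
    congr 1
    ext k l
    simp only [Matrix.sub_apply, Matrix.one_apply, Matrix.submatrix_apply,
      Matrix.mul_apply, hW, hW', Matrix.of_apply, gram]
    congr 1
    by_cases hkl : k = l
    · simp [hkl]
    · have : (k : Fin n) ≠ (l : Fin n) := fun h => hkl (Subtype.ext h)
      simp [hkl, this]
  rw [← hdet1, DPP.det_mul_eq_sum_minors]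
  rw [Finset.sum_filter]
  refine Finset.sum_congr rfl fun S _ => ?_
  by_cases hcard : S.card = T.card
  · rw [dif_pos hcard]
    by_cases hdisj : Disjoint B S
    · have hDU : DU U T S = (X.submatrix id (S.orderEmbOfFin hcard)).det := by
        rw [DU, dif_pos hcard.symm]
        have hmat : (Matrix.of fun a b : Fin S.card =>
              U (T.orderEmbOfFin hcard.symm a) (S.orderEmbOfFin rfl b))
            = (X.submatrix id (S.orderEmbOfFin hcard)).submatrix
                (finCongr hcard) (finCongr hcard) := by
          ext a b
          simp only [Matrix.submatrix_apply, Matrix.of_apply, hX, finCongr_apply, id_eq]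
          have hnot : S.orderEmbOfFin hcard (Fin.cast hcard b) ∉ B :=
            fun h => Finset.disjoint_right.mp hdisj (S.orderEmbOfFin_mem hcard _) h
          rw [if_neg hnot]
          rw [DPP.orderEmbOfFin_cast T hcard.symm rfl,
            DPP.orderEmbOfFin_cast S rfl hcard]
        rw [hmat, Matrix.det_submatrix_equiv_self]
      have hYdet : (Y.submatrix (S.orderEmbOfFin hcard) id).det
          = conj ((X.submatrix id (S.orderEmbOfFin hcard)).det) := by
        have : Y.submatrix (S.orderEmbOfFin hcard) id
            = ((X.submatrix id (S.orderEmbOfFin hcard)).map (starRingEnd ℂ))ᵀ := by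
          ext i b
          simp [hX, hY, Matrix.submatrix_apply, Matrix.map_apply, Matrix.transpose_apply,
            apply_ite (starRingEnd ℂ)]
        rw [this, Matrix.det_transpose]
        exact ((starRingEnd ℂ).map_det _).symm
      rw [if_pos ⟨hdisj, hcard.symm⟩, hDU, hYdet]
    · obtain ⟨k, hkB, hkS⟩ := Finset.not_disjoint_iff.mp hdisj
      have hkim : k ∈ Finset.image (S.orderEmbOfFin hcard) Finset.univ := by
        rw [DPP.image_orderEmbOfFin]; exact hkS
      obtain ⟨b, -, hb⟩ := Finset.mem_image.mp hkim
      rw [if_neg (fun hcon => hdisj hcon.1)]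
      rw [Matrix.det_eq_zero_of_column_eq_zero b
        (fun a => by simp [hX, Matrix.submatrix_apply, hb, hkB]), zero_mul]
  · rw [dif_neg hcard, if_neg (fun hcon => hcard hcon.2.symm)]

end DPP3

namespace DPP3

open Finset Matrix ComplexConjugate

variable {n : ℕ} (U : Matrix (Fin n) (Fin n) ℂ)

lemma projection_identity
    (hrow : ∀ k l, ∑ j, U k j * conj (U l j) = if k = l then (1:ℂ) else 0)
    (T A : Finset (Fin n)) :
    ∑ S ∈ univ.filter (fun S : Finset (Fin n) => A ⊆ S ∧ T.card = S.card),
        DU U T S * conj (DU U T S)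
      = ∑ Rf ∈ univ.filter (fun Rf : Finset (Fin n) => Rf.card = A.card),
          (if Rf ⊆ T then DU U Rf A * conj (DU U Rf A) else 0) := by
  classical
  rw [DPP2.incl_excl (q := fun S => DU U T S * conj (DU U T S))
    (c := fun S => T.card = S.card) A]
  rw [Finset.sum_congr rfl (fun B (_ : B ∈ A.powerset) => by
    rw [sum_disjoint U hrow T B] :
    ∀ B ∈ A.powerset, _ = (-1:ℂ)^B.card * DPP2.sdet (1 - gram U T) B)]
  rw [DPP2.sdet_inv_alt]
  set P : Matrix (Fin A.card) (Fin n) ℂ :=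
    Matrix.of fun a k => if k ∈ T then conj (U k (A.orderEmbOfFin rfl a)) else 0 with hP
  set Q : Matrix (Fin n) (Fin A.card) ℂ :=
    Matrix.of fun k b => if k ∈ T then U k (A.orderEmbOfFin rfl b) else 0 with hQ
  have hPQ : DPP2.sdet (gram U T) A = (P * Q).det := by
    rw [DPP2.sdet_eq]
    congr 1
    ext a b
    simp only [Matrix.of_apply, Matrix.mul_apply, hP, hQ, gram]
    have hk : ∀ k, (if k ∈ T then conj (U k (A.orderEmbOfFin rfl a)) else 0) *
          (if k ∈ T then U k (A.orderEmbOfFin rfl b) else 0)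
        = (if k ∈ T then conj (U k (A.orderEmbOfFin rfl a))
            * U k (A.orderEmbOfFin rfl b) else 0) := by
      intro k; split_ifs <;> ring
    rw [Finset.sum_congr rfl (fun k _ => hk k), Finset.sum_ite_mem, Finset.univ_inter,
      ← DPP.sum_orderEmbOfFin T rfl
        (fun k => conj (U k (A.orderEmbOfFin rfl a)) * U k (A.orderEmbOfFin rfl b))]
  rw [hPQ, DPP.det_mul_eq_sum_minors]
  refine (Finset.sum_congr rfl fun Rf _ => ?_).trans (Finset.sum_filter _ _).symm
  by_cases hR : Rf.card = A.card
  · rw [dif_pos hR, if_pos hR]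
    by_cases hRT : Rf ⊆ T
    · rw [if_pos hRT]
      have hQd : Q.submatrix (Rf.orderEmbOfFin hR) id
          = Matrix.of fun x b : Fin A.card =>
              U (Rf.orderEmbOfFin hR x) (A.orderEmbOfFin rfl b) := by
        ext x b
        simp only [Matrix.submatrix_apply, Matrix.of_apply, hQ, id_eq]
        rw [if_pos (hRT (Rf.orderEmbOfFin_mem hR x))]
      have hPd : P.submatrix id (Rf.orderEmbOfFin hR)
          = ((Matrix.of fun x b : Fin A.card =>
              U (Rf.orderEmbOfFin hR x) (A.orderEmbOfFin rfl b)).map (starRingEnd ℂ))ᵀ := by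
        ext a x
        simp only [Matrix.submatrix_apply, Matrix.of_apply, hP, id_eq,
          Matrix.transpose_apply, Matrix.map_apply]
        rw [if_pos (hRT (Rf.orderEmbOfFin_mem hR x))]
      rw [hQd, hPd, Matrix.det_transpose, DU, dif_pos hR,
        show ((Matrix.of fun x b : Fin A.card =>
            U (Rf.orderEmbOfFin hR x) (A.orderEmbOfFin rfl b)).map (starRingEnd ℂ)).det
          = conj ((Matrix.of fun x b : Fin A.card =>
            U (Rf.orderEmbOfFin hR x) (A.orderEmbOfFin rfl b)).det)
          from ((starRingEnd ℂ).map_det _).symm]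
      ring
    · rw [if_neg hRT]
      have hex : ∃ x : Fin A.card, Rf.orderEmbOfFin hR x ∉ T := by
        obtain ⟨k, hkR, hkT⟩ := Finset.not_subset.mp hRT
        have : k ∈ Finset.image (Rf.orderEmbOfFin hR) Finset.univ := by
          rw [DPP.image_orderEmbOfFin]; exact hkR
        obtain ⟨x, -, rfl⟩ := Finset.mem_image.mp this
        exact ⟨x, hkT⟩
      obtain ⟨x, hx⟩ := hex
      rw [Matrix.det_eq_zero_of_row_eq_zero (A := Q.submatrix (Rf.orderEmbOfFin hR) id) x
        (fun b => by simp [hQ, Matrix.submatrix_apply, hx]), mul_zero]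
  · rw [dif_neg hR, if_neg hR]

lemma kernel_minor (lamC : Fin n → ℂ) (A : Finset (Fin n)) :
    (Matrix.of fun a b : Fin A.card =>
        ∑ k, lamC k * conj (U k (A.orderEmbOfFin rfl a)) * U k (A.orderEmbOfFin rfl b)).det
      = ∑ Rf ∈ univ.filter (fun Rf : Finset (Fin n) => Rf.card = A.card),
          (∏ k ∈ Rf, lamC k) * (DU U Rf A * conj (DU U Rf A)) := by
  classical
  set P : Matrix (Fin A.card) (Fin n) ℂ :=
    Matrix.of fun a k => lamC k * conj (U k (A.orderEmbOfFin rfl a)) with hP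
  set Q : Matrix (Fin n) (Fin A.card) ℂ :=
    Matrix.of fun k b => U k (A.orderEmbOfFin rfl b) with hQ
  have hPQ : (Matrix.of fun a b : Fin A.card =>
        ∑ k, lamC k * conj (U k (A.orderEmbOfFin rfl a)) * U k (A.orderEmbOfFin rfl b))
      = P * Q := by
    ext a b
    simp [Matrix.mul_apply, hP, hQ]
  rw [hPQ, DPP.det_mul_eq_sum_minors]
  refine (Finset.sum_congr rfl fun Rf _ => ?_).trans (Finset.sum_filter _ _).symm
  by_cases hR : Rf.card = A.card
  · rw [dif_pos hR, if_pos hR]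
    have hPd : P.submatrix id (Rf.orderEmbOfFin hR)
        = Matrix.of fun a x : Fin A.card => lamC (Rf.orderEmbOfFin hR x) *
            (((Matrix.of fun x b : Fin A.card =>
              U (Rf.orderEmbOfFin hR x) (A.orderEmbOfFin rfl b)).map (starRingEnd ℂ))ᵀ) a x := by
      ext a x
      simp [Matrix.submatrix_apply, hP, Matrix.transpose_apply, Matrix.map_apply]
    have hQd : Q.submatrix (Rf.orderEmbOfFin hR) id
        = Matrix.of fun x b : Fin A.card =>
            U (Rf.orderEmbOfFin hR x) (A.orderEmbOfFin rfl b) := by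
      ext x b
      simp [Matrix.submatrix_apply, hQ]
    rw [hPd, hQd, Matrix.det_mul_row, Matrix.det_transpose, DU, dif_pos hR,
      DPP.prod_orderEmbOfFin Rf hR lamC,
      show ((Matrix.of fun x b : Fin A.card =>
          U (Rf.orderEmbOfFin hR x) (A.orderEmbOfFin rfl b)).map (starRingEnd ℂ)).det
        = conj ((Matrix.of fun x b : Fin A.card =>
          U (Rf.orderEmbOfFin hR x) (A.orderEmbOfFin rfl b)).det)
        from ((starRingEnd ℂ).map_det _).symm]
    ring
  · rw [dif_neg hR, if_neg hR]

lemma master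
    (hrow : ∀ k l, ∑ j, U k j * conj (U l j) = if k = l then (1:ℂ) else 0)
    (lamC : Fin n → ℂ) (A : Finset (Fin n)) :
    ∑ S ∈ univ.filter (fun S : Finset (Fin n) => A ⊆ S),
        ∑ T : Finset (Fin n),
          (∏ k ∈ T, lamC k) * (∏ k ∈ Tᶜ, (1 - lamC k)) * (DU U T S * conj (DU U T S))
      = (Matrix.of fun a b : Fin A.card =>
          ∑ k, lamC k * conj (U k (A.orderEmbOfFin rfl a))
            * U k (A.orderEmbOfFin rfl b)).det := by
  classical
  rw [kernel_minor U lamC A, Finset.sum_comm]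
  have hT : ∀ T ∈ (univ : Finset (Finset (Fin n))),
      ∑ S ∈ univ.filter (fun S : Finset (Fin n) => A ⊆ S),
          (∏ k ∈ T, lamC k) * (∏ k ∈ Tᶜ, (1 - lamC k)) * (DU U T S * conj (DU U T S))
        = (∏ k ∈ T, lamC k) * (∏ k ∈ Tᶜ, (1 - lamC k)) *
            ∑ Rf ∈ univ.filter (fun Rf : Finset (Fin n) => Rf.card = A.card),
              (if Rf ⊆ T then DU U Rf A * conj (DU U Rf A) else 0) := by
    intro T _
    have hnarrow : ∑ S ∈ univ.filter (fun S : Finset (Fin n) => A ⊆ S),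
          DU U T S * conj (DU U T S)
        = ∑ S ∈ univ.filter (fun S : Finset (Fin n) => A ⊆ S ∧ T.card = S.card),
          DU U T S * conj (DU U T S) := by
      symm
      apply Finset.sum_subset
      · intro S hS
        simp only [Finset.mem_filter, Finset.mem_univ, true_and] at hS ⊢
        exact hS.1
      · intro S hS hnot
        simp only [Finset.mem_filter, Finset.mem_univ, true_and] at hS hnot
        have hne : ¬ T.card = S.card := fun h => hnot ⟨hS, h⟩
        rw [DU, dif_neg hne]
        simp
    rw [← Finset.mul_sum, hnarrow, projection_identity U hrow T A]
  rw [Finset.sum_congr rfl hT]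
  simp_rw [Finset.mul_sum]
  rw [Finset.sum_comm]
  refine Finset.sum_congr rfl fun Rf hRf => ?_
  have hsplit : ∀ T ∈ (univ : Finset (Finset (Fin n))),
      (∏ k ∈ T, lamC k) * (∏ k ∈ Tᶜ, (1 - lamC k)) *
          (if Rf ⊆ T then DU U Rf A * conj (DU U Rf A) else 0)
        = (if Rf ⊆ T then (∏ k ∈ T, lamC k) * (∏ k ∈ Tᶜ, (1 - lamC k)) else 0) *
            (DU U Rf A * conj (DU U Rf A)) := by
    intro T _; split_ifs <;> ring
  rw [Finset.sum_congr rfl hsplit, ← Finset.sum_mul, ← Finset.sum_filter,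
    DPP2.bernoulli_marginal lamC Rf]

end DPP3


open Finset Matrix

theorem quasifree_fock_diagonal_determinantal {n : ℕ} (lam : Fin n → ℝ)
    (hlam : ∀ j, 0 ≤ lam j ∧ lam j ≤ 1)
    (v w : OrthonormalBasis (Fin n) ℂ (EuclideanSpace ℂ (Fin n)))
    (K : Matrix (Fin n) (Fin n) ℂ)
    (hK : ∀ i j, K i j = ∑ k, (lam k : ℂ) *
      ⟪v k, EuclideanSpace.single i 1⟫_ℂ * conj ⟪v k, EuclideanSpace.single j 1⟫_ℂ)
    (𝒦 : Matrix (Fin n) (Fin n) ℂ)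
    (h𝒦 : ∀ i j, 𝒦 i j = ∑ k, (lam k : ℂ) * conj ⟪v k, w i⟫_ℂ * ⟪v k, w j⟫_ℂ) :
    ∃ p : PMF (Finset (Fin n)),
      (∀ S : Finset (Fin n),
        p S = ENNReal.ofReal (∑ T : Finset (Fin n),
          if h : T.card = S.card then
            (∏ k ∈ T, lam k) * (∏ k ∈ Tᶜ, (1 - lam k)) *
              ‖(Matrix.of fun a b : Fin S.card =>
                  ⟪v (T.orderEmbOfFin h a), w (S.orderEmbOfFin rfl b)⟫_ℂ).det‖ ^ 2
          else 0)) ∧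
      IsDeterminantal 𝒦 p := by
  classical
  set U : Matrix (Fin n) (Fin n) ℂ := Matrix.of fun k j => ⟪v k, w j⟫_ℂ with hU
  have hrow : ∀ k l, ∑ j, U k j * conj (U l j) = if k = l then (1:ℂ) else 0 := by
    intro k l
    have h1 : ∀ j, conj (U l j) = ⟪w j, v l⟫_ℂ := fun j => inner_conj_symm (w j) (v l)
    calc ∑ j, U k j * conj (U l j) = ∑ j, ⟪v k, w j⟫_ℂ * ⟪w j, v l⟫_ℂ :=
          Finset.sum_congr rfl fun j _ => by rw [h1 j]; rfl
      _ = ⟪v k, v l⟫_ℂ := w.sum_inner_mul_inner (v k) (v l)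
      _ = if k = l then 1 else 0 := orthonormal_iff_ite.mp v.orthonormal k l
  set lamC : Fin n → ℂ := fun k => (lam k : ℂ) with hlamC
  set F : Finset (Fin n) → ℝ := fun S => ∑ T : Finset (Fin n),
    if h : T.card = S.card then
      (∏ k ∈ T, lam k) * (∏ k ∈ Tᶜ, (1 - lam k)) *
        ‖(Matrix.of fun a b : Fin S.card =>
            ⟪v (T.orderEmbOfFin h a), w (S.orderEmbOfFin rfl b)⟫_ℂ).det‖ ^ 2
    else 0 with hF
  have hF0 : ∀ S, 0 ≤ F S := by
    intro S
    apply Finset.sum_nonneg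
    intro T _
    split
    · apply mul_nonneg (mul_nonneg ?_ ?_) (sq_nonneg _)
      · exact Finset.prod_nonneg fun k _ => (hlam k).1
      · exact Finset.prod_nonneg fun k _ => by linarith [(hlam k).2]
    · exact le_refl _
  have hcast : ∀ S : Finset (Fin n), (F S : ℂ)
      = ∑ T : Finset (Fin n), (∏ k ∈ T, lamC k) * (∏ k ∈ Tᶜ, (1 - lamC k)) *
          (DPP3.DU U T S * conj (DPP3.DU U T S)) := by
    intro S
    rw [hF, Complex.ofReal_sum]
    refine Finset.sum_congr rfl fun T _ => ?_
    by_cases h : T.card = S.card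
    · rw [dif_pos h, DPP3.DU, dif_pos h]
      have hm : (Matrix.of fun a b : Fin S.card =>
            U (T.orderEmbOfFin h a) (S.orderEmbOfFin rfl b))
          = Matrix.of fun a b : Fin S.card =>
            ⟪v (T.orderEmbOfFin h a), w (S.orderEmbOfFin rfl b)⟫_ℂ := rfl
      have habs : ‖(Matrix.of fun a b : Fin S.card =>
            ⟪v (T.orderEmbOfFin h a), w (S.orderEmbOfFin rfl b)⟫_ℂ).det‖ ^ 2
          = Complex.normSq ((Matrix.of fun a b : Fin S.card =>
            ⟪v (T.orderEmbOfFin h a), w (S.orderEmbOfFin rfl b)⟫_ℂ).det) := by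
        rw [Complex.sq_norm]
      rw [hm, Complex.mul_conj, habs]
      push_cast
      simp only [hlamC]
    · rw [dif_neg h, DPP3.DU, dif_neg h]
      simp
  have hmaster : ∀ A : Finset (Fin n),
      ∑ S ∈ univ.filter (fun S : Finset (Fin n) => A ⊆ S), (F S : ℂ)
        = (Matrix.of fun a b : Fin A.card =>
            ∑ k, lamC k * conj (U k (A.orderEmbOfFin rfl a))
              * U k (A.orderEmbOfFin rfl b)).det := by
    intro A
    rw [Finset.sum_congr rfl (fun S _ => hcast S)]
    exact DPP3.master U hrow lamC A
  have hsum1 : ∑ S : Finset (Fin n), F S = 1 := by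
    have h0 := hmaster ∅
    have hfilter : univ.filter (fun S : Finset (Fin n) => ∅ ⊆ S) = univ :=
      Finset.filter_true_of_mem fun S _ => Finset.empty_subset S
    haveI : IsEmpty (Fin (∅ : Finset (Fin n)).card) := by rw [Finset.card_empty]; infer_instance
    rw [hfilter, Matrix.det_isEmpty, ← Complex.ofReal_sum] at h0
    exact_mod_cast h0
  have hnorm : ∑ S : Finset (Fin n), ENNReal.ofReal (F S) = 1 := by
    rw [← ENNReal.ofReal_sum_of_nonneg (fun S _ => hF0 S), hsum1, ENNReal.ofReal_one]
  refine ⟨PMF.ofFintype (fun S => ENNReal.ofReal (F S)) hnorm, fun S => rfl, ?_⟩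
  intro A
  have htor : ∀ T : Finset (Fin n),
      (((PMF.ofFintype (fun S => ENNReal.ofReal (F S)) hnorm) T).toReal : ℂ) = (F T : ℂ) := by
    intro T
    rw [PMF.ofFintype_apply, ENNReal.toReal_ofReal (hF0 T)]
  rw [Finset.sum_congr rfl (fun T _ => htor T), hmaster A]
  have hminor : detMinor 𝒦 A = (Matrix.of fun a b : Fin A.card =>
      ∑ k, lamC k * conj (U k (A.orderEmbOfFin rfl a)) * U k (A.orderEmbOfFin rfl b)).det := by
    rw [detMinor]
    congr 1
    ext a b
    simp only [Matrix.of_apply]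
    rw [h𝒦]
    rfl
  rw [hminor]
end

section
/- Poisson–binomial distribution of the number of points: let n : ℕ, let K : Matrix (Fin n) (Fin n) ℂ be Hermitian with K positive semidefinite and 1 - K positive semidefinite, with eigenvalues λ : Fin n → ℝ (counted with multiplicity, e.g. λ = K.IsHermitian.eigenvalues), and let p be a determinantal probability measure on the subsets of Fin n with kernel K. Then for every k : ℕ, the sum of p S over all S : Finset (Fin n) with S.card = k equals the sum over all T : Finset (Fin n) with T.card = k of (∏ j ∈ T, λ j) * (∏ j ∉ T, (1 - λ j)). Equivalently, the number of points is distributed as a sum of independent Bernoulli(λ j) random variables. -/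
open scoped ComplexConjugate

lemma detMinor_eq_det_subtype {n : ℕ} (M : Matrix (Fin n) (Fin n) ℂ) (S : Finset (Fin n)) :
    detMinor M S = (Matrix.of fun a b : {x // x ∈ S} => M a b).det := by
  rw [← Matrix.det_submatrix_equiv_self (S.orderIsoOfFin rfl).toEquiv
    (Matrix.of fun a b : {x // x ∈ S} => M a b)]
  have : (Matrix.of fun a b : {x // x ∈ S} => M a b).submatrix
      (S.orderIsoOfFin rfl).toEquiv (S.orderIsoOfFin rfl).toEquiv =
      Matrix.of fun a b : Fin S.card => M (S.orderEmbOfFin rfl a) (S.orderEmbOfFin rfl b) := by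
    ext a b
    simp [← Finset.coe_orderIsoOfFin_apply]
  rw [this, detMinor]

lemma det_piecewise {n : ℕ} (M : Matrix (Fin n) (Fin n) ℂ) (S : Finset (Fin n)) :
    (Matrix.of (S.piecewise M (1 : Matrix (Fin n) (Fin n) ℂ))).det = detMinor M S := by
  classical
  rw [← Matrix.det_submatrix_equiv_self (Equiv.sumCompl (· ∈ S))]
  have hb : (Matrix.of (S.piecewise M (1 : Matrix (Fin n) (Fin n) ℂ))).submatrix
      (Equiv.sumCompl (· ∈ S)) (Equiv.sumCompl (· ∈ S)) =
      Matrix.fromBlocks (Matrix.of fun a b : {x // x ∈ S} => M a b)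
        (Matrix.of fun (a : {x // x ∈ S}) (b : {x // x ∉ S}) => M a b) 0 1 := by
    ext i j
    rcases i with i | i <;> rcases j with j | j <;>
      simp [Finset.piecewise, i.2, Matrix.one_apply, Subtype.ext_iff]
    intro hij; exact (i.2 (hij ▸ j.2)).elim
  rw [hb, Matrix.det_fromBlocks_zero₂₁, Matrix.det_one, mul_one, detMinor_eq_det_subtype]

lemma det_one_add' {n : ℕ} (M : Matrix (Fin n) (Fin n) ℂ) :
    (1 + M).det = ∑ S : Finset (Fin n), detMinor M S := by
  classical
  have h := (Matrix.detRowAlternating :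
    (Fin n → ℂ) [⋀^Fin n]→ₗ[ℂ] ℂ).toMultilinearMap.map_add_univ M (1 : Matrix (Fin n) (Fin n) ℂ)
  have h2 : (M + (1 : Matrix (Fin n) (Fin n) ℂ)).det
      = ∑ S : Finset (Fin n),
        (Matrix.of (S.piecewise M (1 : Matrix (Fin n) (Fin n) ℂ))).det := h
  rw [add_comm, h2]
  exact Finset.sum_congr rfl fun S _ => det_piecewise M S

lemma detMinor_smul {n : ℕ} (t : ℂ) (M : Matrix (Fin n) (Fin n) ℂ) (S : Finset (Fin n)) :
    detMinor (t • M) S = t ^ S.card * detMinor M S := by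
  have : (Matrix.of fun a b : Fin S.card =>
      (t • M) (S.orderEmbOfFin rfl a) (S.orderEmbOfFin rfl b)) =
      t • (Matrix.of fun a b : Fin S.card =>
        M (S.orderEmbOfFin rfl a) (S.orderEmbOfFin rfl b)) := by
    ext a b; simp
  rw [detMinor, this, Matrix.det_smul, detMinor]
  simp

lemma det_one_add_smul_herm {n : ℕ} (K : Matrix (Fin n) (Fin n) ℂ) (hK : K.IsHermitian)
    (t : ℂ) :
    (1 + t • K).det = ∏ j, (1 + t * (hK.eigenvalues j : ℂ)) := by
  set U : Matrix (Fin n) (Fin n) ℂ := (hK.eigenvectorUnitary : Matrix (Fin n) (Fin n) ℂ)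
  have hU : U * star U = 1 := (Matrix.mem_unitaryGroup_iff).mp hK.eigenvectorUnitary.2
  have key : 1 + t • K =
      U * (1 + t • Matrix.diagonal (RCLike.ofReal ∘ hK.eigenvalues)) * star U := by
    conv_lhs => rw [hK.spectral_theorem]
    rw [Matrix.mul_add, Matrix.add_mul, Matrix.mul_one, hU, Matrix.mul_smul,
      Matrix.smul_mul, Matrix.mul_assoc]
    rw [Unitary.conjStarAlgAut_apply, Matrix.mul_assoc]
  rw [key, Matrix.det_mul_right_comm, hU, one_mul]
  have : (1 + t • Matrix.diagonal (RCLike.ofReal ∘ hK.eigenvalues) :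
      Matrix (Fin n) (Fin n) ℂ) =
      Matrix.diagonal (fun j => 1 + t * (hK.eigenvalues j : ℂ)) := by
    rw [← Matrix.diagonal_smul, ← Matrix.diagonal_one, ← Matrix.diagonal_add]
    congr 1
  rw [this, Matrix.det_diagonal]

lemma genfun {n : ℕ} (K : Matrix (Fin n) (Fin n) ℂ) (hK : K.IsHermitian)
    (p : PMF (Finset (Fin n))) (hp : IsDeterminantal K p) (x : ℂ) :
    ∑ S : Finset (Fin n), ((p S).toReal : ℂ) * x ^ S.card
      = ∑ T : Finset (Fin n), ((∏ j ∈ T, hK.eigenvalues j : ℝ) : ℂ)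
          * ((∏ j ∈ Tᶜ, (1 - hK.eigenvalues j) : ℝ) : ℂ) * x ^ T.card := by
  classical
  set t : ℂ := x - 1 with ht
  have hx : ∀ m : ℕ, x ^ m = (t + 1) ^ m := by intro m; rw [ht]; ring_nf
  calc ∑ S : Finset (Fin n), ((p S).toReal : ℂ) * x ^ S.card
      = ∑ S : Finset (Fin n), ∑ A ∈ S.powerset, ((p S).toReal : ℂ) * t ^ A.card := by
        refine Finset.sum_congr rfl fun S _ => ?_
        rw [← Finset.mul_sum, hx]
        congr 1
        rw [show ((t + 1) ^ S.card) = ∏ _i ∈ S, (t + 1) from (Finset.prod_const _).symm,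
          Finset.prod_add]
        refine Finset.sum_congr rfl fun A hA => ?_
        simp
    _ = ∑ A : Finset (Fin n), ∑ S ∈ Finset.univ.filter (fun S => A ⊆ S),
          ((p S).toReal : ℂ) * t ^ A.card := by
        refine Finset.sum_comm' ?_
        intro S A
        simp [Finset.mem_powerset]
    _ = ∑ A : Finset (Fin n), detMinor K A * t ^ A.card := by
        refine Finset.sum_congr rfl fun A _ => ?_
        rw [← Finset.sum_mul, hp A]
    _ = ∑ A : Finset (Fin n), detMinor (t • K) A := by
        refine Finset.sum_congr rfl fun A _ => ?_
        rw [detMinor_smul, mul_comm]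
    _ = (1 + t • K).det := (det_one_add' _).symm
    _ = ∏ j, (1 + t * (hK.eigenvalues j : ℂ)) := det_one_add_smul_herm K hK t
    _ = ∏ j, (((hK.eigenvalues j : ℂ)) * x + (1 - (hK.eigenvalues j : ℂ))) := by
        refine Finset.prod_congr rfl fun j _ => ?_
        rw [ht]; ring
    _ = ∑ T ∈ (Finset.univ : Finset (Fin n)).powerset,
          (∏ j ∈ T, (hK.eigenvalues j : ℂ) * x)
            * ∏ j ∈ Finset.univ \ T, (1 - (hK.eigenvalues j : ℂ)) := Finset.prod_add _ _ _
    _ = ∑ T : Finset (Fin n), ((∏ j ∈ T, hK.eigenvalues j : ℝ) : ℂ)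
          * ((∏ j ∈ Tᶜ, (1 - hK.eigenvalues j) : ℝ) : ℂ) * x ^ T.card := by
        rw [Finset.powerset_univ]
        refine Finset.sum_congr rfl fun T _ => ?_
        rw [Finset.prod_mul_distrib, Finset.prod_const, ← Finset.compl_eq_univ_sdiff]
        push_cast
        ring

lemma coeff_extract {n : ℕ} (c d : Finset (Fin n) → ℂ)
    (h : ∀ x : ℂ, ∑ S : Finset (Fin n), c S * x ^ S.card
        = ∑ S : Finset (Fin n), d S * x ^ S.card) (k : ℕ) :
    ∑ S ∈ Finset.univ.filter (fun S : Finset (Fin n) => S.card = k), c S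
      = ∑ S ∈ Finset.univ.filter (fun S : Finset (Fin n) => S.card = k), d S := by
  classical
  have hP : (∑ S : Finset (Fin n), Polynomial.C (c S) * Polynomial.X ^ S.card)
      = ∑ S : Finset (Fin n), Polynomial.C (d S) * Polynomial.X ^ S.card := by
    apply Polynomial.funext
    intro x
    simpa [Polynomial.eval_finset_sum] using h x
  have := congrArg (fun q : Polynomial ℂ => q.coeff k) hP
  simp only [Polynomial.finset_sum_coeff, Polynomial.coeff_C_mul,
    Polynomial.coeff_X_pow, mul_ite, mul_one, mul_zero] at this
  simpa [Finset.sum_filter, eq_comm] using this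

open scoped ComplexOrder in
theorem determinantal_number_poisson_binomial {n : ℕ} (K : Matrix (Fin n) (Fin n) ℂ)
    (hK : K.IsHermitian) (hpos : K.PosSemidef) (hcon : (1 - K).PosSemidef)
    (p : PMF (Finset (Fin n))) (hp : IsDeterminantal K p) (k : ℕ) :
    ∑ S ∈ Finset.univ.filter (fun S : Finset (Fin n) => S.card = k), (p S).toReal =
      ∑ T ∈ Finset.univ.filter (fun T : Finset (Fin n) => T.card = k),
        (∏ j ∈ T, hK.eigenvalues j) * ∏ j ∈ Tᶜ, (1 - hK.eigenvalues j) := by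
  have hc := coeff_extract (fun S => ((p S).toReal : ℂ))
    (fun T => ((∏ j ∈ T, hK.eigenvalues j : ℝ) : ℂ)
      * ((∏ j ∈ Tᶜ, (1 - hK.eigenvalues j) : ℝ) : ℂ))
    (fun x => genfun K hK p hp x) k
  exact_mod_cast hc
end

section
/- Restriction of a determinantal measure is determinantal: let n : ℕ, let p be a determinantal probability measure on the subsets of Fin n with kernel K : Matrix (Fin n) (Fin n) ℂ, and let E : Finset (Fin n). Define the restricted probability mass function q on Finset (Fin n) by q S = ∑ over T : Finset (Fin n) with T ∩ E = S of p T. Then q is a determinantal probability measure with kernel K_E, where K_E i j = K i j if i ∈ E and j ∈ E, and K_E i j = 0 otherwise. -/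
open scoped ComplexConjugate

open Finset

theorem PMF.sum_map_apply {α β : Type*} [Fintype α] [DecidableEq β] (p : PMF α) (f : α → β)
    (t : Finset β) : ∑ b ∈ t, p.map f b = ∑ a with f a ∈ t, p a := by
  simp only [PMF.map_apply, tsum_fintype]
  rw [sum_comm, sum_filter]
  refine sum_congr rfl fun a _ => ?_
  convert sum_ite_eq' t (f a) fun _ => p a

theorem PMF.sum_toReal_map {α β : Type*} [Fintype α] [DecidableEq β] (p : PMF α) (f : α → β)
    (t : Finset β) : ∑ b ∈ t, (p.map f b).toReal = ∑ a with f a ∈ t, (p a).toReal := by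
  rw [← ENNReal.toReal_sum fun b _ => PMF.apply_ne_top _ b, PMF.sum_map_apply,
    ENNReal.toReal_sum fun a _ => PMF.apply_ne_top p a]

theorem detMinor_of_ite_mem {n : ℕ} (K : Matrix (Fin n) (Fin n) ℂ) (E S : Finset (Fin n)) :
    detMinor (Matrix.of fun i j => if i ∈ E ∧ j ∈ E then K i j else 0) S =
      if S ⊆ E then detMinor K S else 0 := by
  have hmem (a : Fin S.card) : S.orderEmbOfFin rfl a ∈ S := S.orderEmbOfFin_mem rfl a
  split_ifs with hSE
  · unfold detMinor
    congr 1
    ext a b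
    simp [hSE (hmem a), hSE (hmem b)]
  · obtain ⟨i, hiS, hiE⟩ := not_subset.mp hSE
    obtain ⟨a, rfl⟩ : i ∈ Set.range (S.orderEmbOfFin rfl) := by
      rwa [S.range_orderEmbOfFin rfl]
    exact Matrix.det_eq_zero_of_row_eq_zero a fun b => by simp [hiE]

theorem restriction_determinantal {n : ℕ} (K : Matrix (Fin n) (Fin n) ℂ)
    (p : PMF (Finset (Fin n))) (hp : IsDeterminantal K p) (E : Finset (Fin n)) :
    IsDeterminantal
      (Matrix.of fun i j => if i ∈ E ∧ j ∈ E then K i j else 0)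
      (p.map fun T => T ∩ E) := by
  intro S
  rw [← Complex.ofReal_sum, PMF.sum_toReal_map, detMinor_of_ite_mem]
  split_ifs with hSE
  · simp_rw [mem_filter, mem_univ, true_and, subset_inter_iff, hSE, and_true]
    rw [Complex.ofReal_sum, hp S]
  · rw [filter_false_of_mem fun T _ hT => hSE ((mem_filter.mp hT).2.trans inter_subset_right)]
    simp
end

section
/- Probability of avoiding a set: let n : ℕ, let K : Matrix (Fin n) (Fin n) ℂ be Hermitian with K positive semidefinite and 1 - K positive semidefinite, let p be a determinantal probability measure on the subsets of Fin n with kernel K, and let E : Finset (Fin n). Then the sum of p S over all S : Finset (Fin n) with S ∩ E = ∅ (coerced to ℂ) equals the determinant of the E.card × E.card matrix 1 - (principal submatrix of K on E). -/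
open scoped ComplexConjugate

lemma detMinor_eq_of_card {n : ℕ} (K : Matrix (Fin n) (Fin n) ℂ) (S : Finset (Fin n)) {k : ℕ}
    (h : S.card = k) :
    detMinor K S = (Matrix.of fun a b : Fin k =>
      K (S.orderEmbOfFin h a) (S.orderEmbOfFin h b)).det := by
  subst h; rfl

lemma det_piecewise_one {m : ℕ} (B : Matrix (Fin m) (Fin m) ℂ) (s : Finset (Fin m)) :
    Matrix.det (s.piecewise B (1 : Matrix (Fin m) (Fin m) ℂ)) =
      (Matrix.of fun a b : Fin s.card =>
        B (s.orderEmbOfFin rfl a) (s.orderEmbOfFin rfl b)).det := by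
  classical
  refine (Matrix.twoBlockTriangular_det _ (· ∈ s) (by
    intro i hi j hj
    have : (s.piecewise B (1 : Matrix (Fin m) (Fin m) ℂ)) i = (1 : Matrix (Fin m) (Fin m) ℂ) i :=
      Finset.piecewise_eq_of_notMem _ _ _ hi
    rw [this, Matrix.one_apply_ne]
    exact fun hij => hi (hij ▸ hj))).trans ?_
  have h2 : (Matrix.toSquareBlockProp (s.piecewise B (1 : Matrix (Fin m) (Fin m) ℂ))
      fun i => ¬ (i ∈ s)) = 1 := by
    ext i j
    have h : (s.piecewise B (1 : Matrix (Fin m) (Fin m) ℂ)) i.1 = (1 : Matrix (Fin m) (Fin m) ℂ) i.1 :=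
      Finset.piecewise_eq_of_notMem _ _ _ i.2
    refine (congrFun h j.1).trans ?_
    rw [Matrix.one_apply, Matrix.one_apply]
    simp [Subtype.ext_iff]
  rw [h2, Matrix.det_one, mul_one]
  have h1 : (Matrix.toSquareBlockProp (s.piecewise B (1 : Matrix (Fin m) (Fin m) ℂ))
      fun i => i ∈ s) = Matrix.of fun i j : {x // x ∈ s} => B i.1 j.1 := by
    ext i j
    exact congrFun (Finset.piecewise_eq_of_mem _ _ _ i.2) j.1
  rw [h1, show (Matrix.of fun a b : Fin s.card =>
        B (s.orderEmbOfFin rfl a) (s.orderEmbOfFin rfl b)) =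
      (Matrix.of fun i j : {x // x ∈ s} => B i.1 j.1).submatrix
        (s.orderIsoOfFin rfl).toEquiv (s.orderIsoOfFin rfl).toEquiv from rfl,
    Matrix.det_submatrix_equiv_self]
  congr!

lemma det_one_add_sum {m : ℕ} (B : Matrix (Fin m) (Fin m) ℂ) :
    (1 + B).det = ∑ s : Finset (Fin m),
      (Matrix.of fun a b : Fin s.card =>
        B (s.orderEmbOfFin rfl a) (s.orderEmbOfFin rfl b)).det := by
  classical
  have h := (Matrix.detRowAlternating :
    (Fin m → ℂ) [⋀^Fin m]→ₗ[ℂ] ℂ).toMultilinearMap.map_add_univ B (1 : Matrix (Fin m) (Fin m) ℂ)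
  replace h := (congrArg Matrix.det (add_comm 1 B)).trans h
  calc (1 + B).det = ∑ s : Finset (Fin m),
      Matrix.det (s.piecewise B (1 : Matrix (Fin m) (Fin m) ℂ)) := by exact h
    _ = _ := Finset.sum_congr rfl fun s _ => det_piecewise_one B s

open scoped ComplexOrder in
theorem determinantal_avoid_prob {n : ℕ} (K : Matrix (Fin n) (Fin n) ℂ)
    (hK : K.IsHermitian) (hpos : K.PosSemidef) (hcon : (1 - K).PosSemidef)
    (p : PMF (Finset (Fin n))) (hp : IsDeterminantal K p) (E : Finset (Fin n)) :
    ((∑ S ∈ Finset.univ.filter (fun S : Finset (Fin n) => S ∩ E = ∅),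
        (p S).toReal : ℝ) : ℂ) =
      ((1 : Matrix (Fin E.card) (Fin E.card) ℂ) -
        Matrix.of (fun a b : Fin E.card =>
          K (E.orderEmbOfFin rfl a) (E.orderEmbOfFin rfl b))).det := by
  classical
  set embE := E.orderEmbOfFin rfl with hembE
  set M : Matrix (Fin E.card) (Fin E.card) ℂ :=
    Matrix.of (fun a b : Fin E.card => K (embE a) (embE b)) with hM
  -- RHS expansion
  have hneg : ∀ s : Finset (Fin E.card),
      (Matrix.of fun a b : Fin s.card =>
        (-M) (s.orderEmbOfFin rfl a) (s.orderEmbOfFin rfl b)).det =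
      (-1 : ℂ) ^ s.card * detMinor K (s.map embE.toEmbedding) := by
    intro s
    have hcard : (s.map embE.toEmbedding).card = s.card := Finset.card_map _
    rw [detMinor_eq_of_card K _ hcard]
    have hemb : ((s.map embE.toEmbedding).orderEmbOfFin hcard : Fin s.card → Fin n)
        = fun i => embE (s.orderEmbOfFin rfl i) := by
      refine (Finset.orderEmbOfFin_unique hcard ?_ ?_).symm
      · intro i
        exact Finset.mem_map_of_mem _ (Finset.orderEmbOfFin_mem s rfl i)
      · exact embE.strictMono.comp (s.orderEmbOfFin rfl).strictMono
    have : (Matrix.of fun a b : Fin s.card =>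
        (-M) (s.orderEmbOfFin rfl a) (s.orderEmbOfFin rfl b)) =
        -(Matrix.of fun a b : Fin s.card =>
          K ((s.map embE.toEmbedding).orderEmbOfFin hcard a)
            ((s.map embE.toEmbedding).orderEmbOfFin hcard b)) := by
      ext a b
      simp [hemb, hM]
    rw [this, Matrix.det_neg]
    simp
  have hrhs : ((1 : Matrix (Fin E.card) (Fin E.card) ℂ) - M).det =
      ∑ A ∈ E.powerset, (-1 : ℂ) ^ A.card * detMinor K A := by
    rw [sub_eq_add_neg, det_one_add_sum]
    rw [Finset.sum_congr rfl fun s _ => hneg s]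
    refine Finset.sum_nbij' (fun s => s.map embE.toEmbedding)
      (fun A => Finset.univ.filter (fun i => embE i ∈ A)) ?_ ?_ ?_ ?_ ?_
    · intro s _
      simp only [Finset.mem_powerset]
      intro x hx
      obtain ⟨i, _, rfl⟩ := Finset.mem_map.mp hx
      exact Finset.orderEmbOfFin_mem E rfl i
    · intro A _; exact Finset.mem_univ _
    · intro s _
      ext i
      simp [embE.injective.eq_iff]
    · intro A hA
      simp only [Finset.mem_powerset] at hA
      ext x
      simp only [Finset.mem_map, Finset.mem_filter, Finset.mem_univ, true_and]
      constructor
      · rintro ⟨i, hi, rfl⟩; exact hi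
      · intro hx
        have hxE : x ∈ E := hA hx
        have : x ∈ Set.range embE := by
          rw [hembE, Finset.range_orderEmbOfFin]; exact hxE
        obtain ⟨i, rfl⟩ := this
        exact ⟨i, hx, rfl⟩
    · intro s _
      rw [Finset.card_map]
  rw [show ((1 : Matrix (Fin E.card) (Fin E.card) ℂ) -
        Matrix.of (fun a b : Fin E.card =>
          K (E.orderEmbOfFin rfl a) (E.orderEmbOfFin rfl b))).det = (1 - M).det from rfl, hrhs]
  -- LHS: inclusion–exclusion
  push_cast
  have key : ∀ S : Finset (Fin n),
      (if S ∩ E = ∅ then ((p S).toReal : ℂ) else 0) =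
      ∑ A ∈ E.powerset, (if A ⊆ S then (-1 : ℂ) ^ A.card * ((p S).toReal : ℂ) else 0) := by
    intro S
    have hpow : (S ∩ E).powerset = E.powerset.filter (· ⊆ S) := by
      ext A
      simp only [Finset.mem_powerset, Finset.mem_filter, Finset.subset_inter_iff]
      tauto
    have hpows : (∑ A ∈ (S ∩ E).powerset, (-1 : ℂ) ^ A.card)
        = if S ∩ E = ∅ then 1 else 0 := by
      have h := Finset.sum_powerset_neg_one_pow_card (x := S ∩ E)
      have h2 := congrArg (fun z : ℤ => (z : ℂ)) h
      push_cast at h2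
      simpa [apply_ite (fun z : ℤ => (z : ℂ))] using h2
    calc (if S ∩ E = ∅ then ((p S).toReal : ℂ) else 0)
        = (∑ A ∈ (S ∩ E).powerset, (-1 : ℂ) ^ A.card) * ((p S).toReal : ℂ) := by
          rw [hpows]
          split <;> simp
      _ = ∑ A ∈ (S ∩ E).powerset, (-1 : ℂ) ^ A.card * ((p S).toReal : ℂ) :=
          Finset.sum_mul _ _ _
      _ = ∑ A ∈ E.powerset.filter (· ⊆ S), (-1 : ℂ) ^ A.card * ((p S).toReal : ℂ) := by
          rw [hpow]
      _ = _ := Finset.sum_filter _ _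
  calc (∑ S ∈ Finset.univ.filter (fun S : Finset (Fin n) => S ∩ E = ∅), ((p S).toReal : ℂ))
      = ∑ S : Finset (Fin n), (if S ∩ E = ∅ then ((p S).toReal : ℂ) else 0) :=
        Finset.sum_filter _ _
    _ = ∑ S : Finset (Fin n), ∑ A ∈ E.powerset,
          (if A ⊆ S then (-1 : ℂ) ^ A.card * ((p S).toReal : ℂ) else 0) :=
        Finset.sum_congr rfl fun S _ => key S
    _ = ∑ A ∈ E.powerset, ∑ S : Finset (Fin n),
          (if A ⊆ S then (-1 : ℂ) ^ A.card * ((p S).toReal : ℂ) else 0) := Finset.sum_comm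
    _ = ∑ A ∈ E.powerset, (-1 : ℂ) ^ A.card *
          ∑ S ∈ Finset.univ.filter (fun S => A ⊆ S), ((p S).toReal : ℂ) := by
        refine Finset.sum_congr rfl fun A _ => ?_
        rw [← Finset.sum_filter, Finset.mul_sum]
    _ = ∑ A ∈ E.powerset, (-1 : ℂ) ^ A.card * detMinor K A := by
        refine Finset.sum_congr rfl fun A _ => ?_
        rw [hp A]
end

section
/- Janossy (pointwise) formula for kernels of norm less than one: let n : ℕ, let K : Matrix (Fin n) (Fin n) ℂ be Hermitian and positive semidefinite with all eigenvalues strictly less than 1 (equivalently, 1 - K is positive definite), and set L = (1 - K)⁻¹ * K. If p is a determinantal probability measure on the subsets of Fin n with kernel K, then for every S : Finset (Fin n), p S (coerced to ℂ) equals det (1 - K) times the determinant of the principal submatrix of L on S. -/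
open scoped ComplexConjugate

open Finset in
lemma mobius_inv {α : Type*} [DecidableEq α] [Fintype α] (f g : Finset α → ℂ)
    (h : ∀ S, ∑ T ∈ Finset.univ.filter (fun T => S ⊆ T), g T = f S) (S : Finset α) :
    g S = ∑ T ∈ Finset.univ.filter (fun T => S ⊆ T), (-1 : ℂ) ^ (T \ S).card * f T := by
  symm
  have key : ∀ U : Finset α, S ⊆ U →
      (∑ T ∈ Finset.univ.filter (fun T => S ⊆ T ∧ T ⊆ U), (-1 : ℂ) ^ (T \ S).card)
        = if U = S then 1 else 0 := by
    intro U hSU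
    have hb : (∑ T ∈ Finset.univ.filter (fun T => S ⊆ T ∧ T ⊆ U), (-1 : ℂ) ^ (T \ S).card)
        = ∑ V ∈ (U \ S).powerset, (-1 : ℂ) ^ V.card := by
      refine Finset.sum_nbij' (fun T => T \ S) (fun V => V ∪ S) ?_ ?_ ?_ ?_ ?_
      · intro T hT
        simp only [mem_filter, mem_univ, true_and] at hT
        simp only [mem_powerset]
        exact sdiff_subset_sdiff hT.2 le_rfl
      · intro V hV
        simp only [mem_powerset] at hV
        simp only [mem_filter, mem_univ, true_and]
        constructor
        · exact subset_union_right
        · exact union_subset (hV.trans (sdiff_subset)) hSU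
      · intro T hT
        simp only [mem_filter, mem_univ, true_and] at hT
        exact sdiff_union_of_subset hT.1
      · intro V hV
        simp only [mem_powerset] at hV
        refine union_sdiff_cancel_right ?_
        exact disjoint_sdiff_self_left.mono_left hV
      · intros; rfl
    have : (∑ V ∈ (U \ S).powerset, (-1 : ℂ) ^ V.card)
        = ((∑ V ∈ (U \ S).powerset, (-1 : ℤ) ^ V.card : ℤ) : ℂ) := by
      push_cast; rfl
    rw [hb, this, Finset.sum_powerset_neg_one_pow_card]
    simp only [sdiff_eq_empty_iff_subset]
    push_cast
    by_cases hUS : U = S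
    · simp [hUS]
    · rw [if_neg (fun h' => hUS (subset_antisymm h' hSU)), if_neg hUS]
  calc ∑ T ∈ Finset.univ.filter (fun T => S ⊆ T), (-1 : ℂ) ^ (T \ S).card * f T
      = ∑ T ∈ Finset.univ.filter (fun T => S ⊆ T), ∑ U ∈ Finset.univ.filter (fun U => T ⊆ U),
          (-1 : ℂ) ^ (T \ S).card * g U := by
        refine Finset.sum_congr rfl fun T _ => ?_
        rw [← h T, Finset.mul_sum]
    _ = ∑ T : Finset α, ∑ U : Finset α,
          if S ⊆ T ∧ T ⊆ U then (-1 : ℂ) ^ (T \ S).card * g U else 0 := by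
        rw [Finset.sum_filter]
        refine Finset.sum_congr rfl fun T _ => ?_
        by_cases hT : S ⊆ T
        · rw [if_pos hT, Finset.sum_filter]
          refine Finset.sum_congr rfl fun U _ => ?_
          by_cases hU : T ⊆ U <;> simp [hT, hU]
        · rw [if_neg hT]
          refine (Finset.sum_eq_zero fun U _ => ?_).symm
          simp [hT]
    _ = ∑ U : Finset α, ∑ T : Finset α,
          if S ⊆ T ∧ T ⊆ U then (-1 : ℂ) ^ (T \ S).card * g U else 0 := Finset.sum_comm
    _ = ∑ U : Finset α, (if S ⊆ U then (if U = S then (1:ℂ) else 0) else 0) * g U := by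
        refine Finset.sum_congr rfl fun U _ => ?_
        by_cases hSU : S ⊆ U
        · rw [if_pos hSU, ← key U hSU, Finset.sum_mul, Finset.sum_filter]
        · rw [if_neg hSU, zero_mul]
          refine Finset.sum_eq_zero fun T _ => ?_
          rw [if_neg]
          rintro ⟨h1, h2⟩
          exact hSU (h1.trans h2)
    _ = g S := by
        rw [Finset.sum_eq_single S]
        · simp
        · intro U _ hUS
          simp [hUS]
        · simp

open Finset Matrix in
lemma detMinor_eq_det_submatrix {n : ℕ} (K : Matrix (Fin n) (Fin n) ℂ) (S : Finset (Fin n)) :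
    detMinor K S = (K.submatrix (fun i : {x // x ∈ S} => (i : Fin n))
      (fun j : {x // x ∈ S} => (j : Fin n))).det := by
  rw [← Matrix.det_submatrix_equiv_self (S.orderIsoOfFin rfl).toEquiv]
  rfl

open Finset Matrix in
lemma det_piecewise_diagonal {n : ℕ} (K : Matrix (Fin n) (Fin n) ℂ) (z : Fin n → ℂ)
    (T : Finset (Fin n)) :
    (Matrix.of (T.piecewise K (Matrix.diagonal z))).det
      = (∏ i ∈ Tᶜ, z i) * detMinor K T := by
  rw [detMinor_eq_det_submatrix,
    ← Matrix.det_submatrix_equiv_self (Equiv.sumCompl (fun x => x ∈ T))]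
  have hb : (Matrix.of (T.piecewise K (Matrix.diagonal z))).submatrix
      (Equiv.sumCompl (fun x => x ∈ T)) (Equiv.sumCompl (fun x => x ∈ T))
      = Matrix.fromBlocks
        (K.submatrix (fun i : {x // x ∈ T} => (i : Fin n)) (fun j : {x // x ∈ T} => (j : Fin n)))
        (K.submatrix (fun i : {x // x ∈ T} => (i : Fin n)) (fun j : {x // x ∉ T} => (j : Fin n)))
        0 (Matrix.diagonal fun i : {x // x ∉ T} => z i) := by
    ext i j
    cases i with
    | inl i =>
      cases j with
      | inl j => simp [Finset.piecewise, i.2]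
      | inr j => simp [Finset.piecewise, i.2]
    | inr i =>
      cases j with
      | inl j =>
        have : (i : Fin n) ≠ (j : Fin n) := fun h => i.2 (h ▸ j.2)
        simp [Finset.piecewise, i.2, Matrix.diagonal_apply_ne _ this]
      | inr j =>
        rcases eq_or_ne i j with h | h
        · subst h; simp [Finset.piecewise, i.2]
        · have : (i : Fin n) ≠ (j : Fin n) := fun hh => h (Subtype.ext hh)
          simp [Finset.piecewise, i.2, Matrix.diagonal_apply_ne _ this,
            Matrix.diagonal_apply_ne _ h]
  rw [hb, Matrix.det_fromBlocks_zero₂₁, Matrix.det_diagonal, mul_comm]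
  congr 1
  rw [← Finset.prod_coe_sort Tᶜ z]
  exact Finset.prod_equiv (Equiv.subtypeEquivRight (by simp)) (by simp) (by simp)

open Finset Matrix in
lemma det_add_diagonal {n : ℕ} (K : Matrix (Fin n) (Fin n) ℂ) (z : Fin n → ℂ) :
    (K + Matrix.diagonal z).det
      = ∑ T : Finset (Fin n), (∏ i ∈ Tᶜ, z i) * detMinor K T := by
  have h := (Matrix.detRowAlternating :
      (Fin n → ℂ) [⋀^Fin n]→ₗ[ℂ] ℂ).toMultilinearMap.map_add_univ K (Matrix.diagonal z)
  calc (K + Matrix.diagonal z).det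
      = ∑ s : Finset (Fin n),
          (Matrix.of (s.piecewise K (Matrix.diagonal z))).det := h
    _ = _ := by
        refine Finset.sum_congr rfl fun T _ => ?_
        exact det_piecewise_diagonal K z T

lemma sign_helper {a b c : ℕ} (h : a + b = c) : ((-1:ℂ))^a = (-1)^c * (-1)^b := by
  subst h
  rw [pow_add, mul_assoc, ← mul_pow]
  norm_num

open scoped ComplexOrder in
theorem determinantal_janossy {n : ℕ} (K : Matrix (Fin n) (Fin n) ℂ)
    (hK : K.IsHermitian) (hpos : K.PosSemidef) (hlt : (1 - K).PosDef)
    (p : PMF (Finset (Fin n))) (hp : IsDeterminantal K p) (S : Finset (Fin n)) :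
    ((p S).toReal : ℂ) = (1 - K).det * detMinor ((1 - K)⁻¹ * K) S := by
  classical
  set L := (1 - K)⁻¹ * K with hL
  have hdet : IsUnit (1 - K).det := hlt.det_pos.ne'.isUnit
  have hLK : L * (1 - K) = K := by
    have hcomm : K * (1 - K) = (1 - K) * K := by
      rw [Matrix.mul_sub, Matrix.sub_mul, Matrix.mul_one, Matrix.one_mul]
    calc L * (1 - K) = (1 - K)⁻¹ * (K * (1 - K)) := by rw [hL, Matrix.mul_assoc]
      _ = (1 - K)⁻¹ * (1 - K) * K := by rw [hcomm, Matrix.mul_assoc]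
      _ = K := by rw [Matrix.nonsing_inv_mul _ hdet, Matrix.one_mul]
  have hmob := mobius_inv (detMinor K) (fun T => ((p T).toReal : ℂ)) hp S
  set z : Fin n → ℂ := fun i => if i ∈ S then 0 else -1 with hz
  have hprod : ∀ T : Finset (Fin n),
      (∏ i ∈ Tᶜ, z i) = if S ⊆ T then (-1:ℂ)^(Tᶜ.card) else 0 := by
    intro T
    by_cases hST : S ⊆ T
    · rw [if_pos hST]
      calc ∏ i ∈ Tᶜ, z i = ∏ _i ∈ Tᶜ, (-1:ℂ) := by
            refine Finset.prod_congr rfl fun i hi => ?_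
            have hiS : i ∉ S := fun h => (Finset.mem_compl.mp hi) (hST h)
            simp [hz, hiS]
        _ = (-1:ℂ)^(Tᶜ.card) := Finset.prod_const _
    · rw [if_neg hST]
      obtain ⟨i, hiS, hiT⟩ := Finset.not_subset.mp hST
      exact Finset.prod_eq_zero (Finset.mem_compl.mpr hiT) (by simp [hz, hiS])
  have hexp : (K + Matrix.diagonal z).det
      = ∑ T ∈ Finset.univ.filter (fun T => S ⊆ T), (-1:ℂ)^(Tᶜ.card) * detMinor K T := by
    rw [det_add_diagonal, Finset.sum_filter]
    refine Finset.sum_congr rfl fun T _ => ?_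
    rw [hprod T]
    by_cases hST : S ⊆ T <;> simp [hST]
  have hw : K + Matrix.diagonal z
      = Matrix.diagonal (fun i => if i ∈ S then (1:ℂ) else -1) * (Matrix.of (S.piecewise K ((1 - K : Matrix (Fin n) (Fin n) ℂ) : Fin n → Fin n → ℂ))) := by
    ext i j
    rw [Matrix.diagonal_mul]
    rw [Matrix.add_apply, Matrix.diagonal_apply]
    by_cases hi : i ∈ S
    · simp [hz, hi, Finset.piecewise]
    · simp only [Matrix.of_apply, Finset.piecewise, hz, if_neg hi,
        Matrix.sub_apply, Matrix.one_apply]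
      split_ifs <;> ring
  have hdetw : (Matrix.diagonal (fun i => if i ∈ S then (1:ℂ) else -1)).det = (-1:ℂ)^(Sᶜ.card) := by
    rw [Matrix.det_diagonal, ← Finset.prod_mul_prod_compl S]
    simp [Finset.prod_ite_of_true, Finset.mem_compl]
    rw [Finset.prod_congr rfl (fun i hi => if_neg (Finset.mem_compl.mp hi)), Finset.prod_const]
  have hfac : Matrix.of (S.piecewise K ((1 - K : Matrix (Fin n) (Fin n) ℂ) : Fin n → Fin n → ℂ)) = (Matrix.of (S.piecewise L (1 : Matrix (Fin n) (Fin n) ℂ))) * (1 - K) := by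
    ext i j
    rw [Matrix.mul_apply]
    by_cases hi : i ∈ S
    · simp only [Matrix.of_apply, Finset.piecewise, if_pos hi]
      rw [← Matrix.mul_apply, hLK]
    · simp only [Matrix.of_apply, Finset.piecewise, if_neg hi]
      rw [← Matrix.mul_apply, Matrix.one_mul]
  have hdetC : (Matrix.of (S.piecewise L (1 : Matrix (Fin n) (Fin n) ℂ))).det = detMinor L S := by
    have h := det_piecewise_diagonal L (fun _ => (1:ℂ)) S
    rw [show (Matrix.diagonal (fun _ : Fin n => (1:ℂ))) = 1 from Matrix.diagonal_one] at h
    simpa using h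
  have hsq : ((-1:ℂ))^(Sᶜ.card) * (-1)^(Sᶜ.card) = 1 := by
    rw [← mul_pow]; norm_num
  calc ((p S).toReal : ℂ)
      = ∑ T ∈ Finset.univ.filter (fun T => S ⊆ T), (-1:ℂ)^((T \ S).card) * detMinor K T := hmob
    _ = ∑ T ∈ Finset.univ.filter (fun T => S ⊆ T),
          (-1:ℂ)^(Sᶜ.card) * ((-1:ℂ)^(Tᶜ.card) * detMinor K T) := by
        refine Finset.sum_congr rfl fun T hT => ?_
        have hST : S ⊆ T := (Finset.mem_filter.mp hT).2
        have hdisj : Disjoint (T \ S) Tᶜ := by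
          rw [Finset.disjoint_left]
          intro a ha hc
          exact (Finset.mem_compl.mp hc) (Finset.mem_sdiff.mp ha).1
        have hunion : (T \ S) ∪ Tᶜ = Sᶜ := by
          ext i
          simp only [Finset.mem_union, Finset.mem_sdiff, Finset.mem_compl]
          constructor
          · rintro (⟨_, h2⟩ | h2)
            · exact h2
            · exact fun hh => h2 (hST hh)
          · intro hiS
            by_cases hiT : i ∈ T
            · exact Or.inl ⟨hiT, hiS⟩
            · exact Or.inr hiT
        have hcard : (T \ S).card + Tᶜ.card = Sᶜ.card := by
          rw [← Finset.card_union_of_disjoint hdisj, hunion]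
        rw [sign_helper hcard, mul_assoc]
    _ = (-1:ℂ)^(Sᶜ.card) * (K + Matrix.diagonal z).det := by
        rw [hexp, Finset.mul_sum]
    _ = (-1:ℂ)^(Sᶜ.card) * ((-1:ℂ)^(Sᶜ.card) *
          ((Matrix.of (S.piecewise L (1 : Matrix (Fin n) (Fin n) ℂ))).det * (1 - K).det)) := by
        rw [hw, Matrix.det_mul, hdetw, hfac, Matrix.det_mul]
    _ = (1 - K).det * detMinor L S := by
        rw [← mul_assoc, hsq, one_mul, hdetC, mul_comm]
end

section
/- Factorial-moment (correlation function) identity on a finite set: let n : ℕ, let p be a determinantal probability measure on the subsets of Fin n with kernel K : Matrix (Fin n) (Fin n) ℂ, let m : ℕ and let E : Fin m → Finset (Fin n) be pairwise disjoint. Then the expectation ∑ over S : Finset (Fin n) of p S * ∏ j, ((S ∩ E j).card : ℂ) equals the sum over all tuples x : Fin m → Fin n with x j ∈ E j for each j of the determinant of the m × m matrix with (i,j) entry K (x i) (x j). -/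
/-!
Expanding `∏ j, #(S ∩ E j)` as the number of tuples `x ∈ ∏ j, E j` with all `x j ∈ S` and
exchanging the sums, each tuple contributes `∑_{T ⊇ range x} p T`, which is the principal
minor of `K` on `range x` by the determinantal property. Disjointness of the `E j` makes every
such tuple injective, so that minor is the determinant of `K (x i) (x j)` up to a simultaneous
reindexing of rows and columns.
-/

open scoped ComplexConjugate

open Finset

theorem prod_card_inter_eq_card_filter_piFinset {ι α : Type*} [Fintype ι] [DecidableEq ι]
    [DecidableEq α] (S : Finset α) (E : ι → Finset α) :
    ∏ j, #(S ∩ E j) = #{x ∈ Fintype.piFinset E | ∀ j, x j ∈ S} := by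
  rw [← Fintype.card_piFinset]
  congr 1
  ext x
  simp only [Fintype.mem_piFinset, mem_inter, mem_filter, forall_and, and_comm]

theorem injective_of_mem_piFinset_of_pairwise_disjoint {ι α : Type*} [Fintype ι] [DecidableEq ι]
    {E : ι → Finset α} (hE : Pairwise fun i j => Disjoint (E i) (E j)) {x : ι → α}
    (hx : x ∈ Fintype.piFinset E) : Function.Injective x := by
  rw [Fintype.mem_piFinset] at hx
  intro i j hij
  by_contra hne
  exact disjoint_left.mp (hE hne) (hx i) (hij ▸ hx j)

theorem sum_mul_prod_card_inter {ι α R : Type*} [Fintype ι] [DecidableEq ι] [Fintype α]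
    [DecidableEq α] [CommSemiring R] (f : Finset α → R) (E : ι → Finset α) :
    ∑ S, f S * ∏ j, (#(S ∩ E j) : R) =
      ∑ x ∈ Fintype.piFinset E, ∑ S with image x univ ⊆ S, f S := by
  simp only [← Nat.cast_prod, prod_card_inter_eq_card_filter_piFinset, card_filter,
    Nat.cast_sum, Nat.cast_ite, Nat.cast_one, Nat.cast_zero, mul_sum, mul_boole, sum_filter,
    image_subset_iff, mem_univ, forall_const]
  exact sum_comm

theorem detMinor_image {n m : ℕ} (K : Matrix (Fin n) (Fin n) ℂ) {x : Fin m → Fin n}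
    (hx : Function.Injective x) :
    detMinor K (image x univ) = (Matrix.of fun i j => K (x i) (x j)).det := by
  set T := image x univ
  let e : Fin #T ≃ Fin m := (T.orderIsoOfFin rfl).toEquiv.trans
    ((Equiv.subtypeEquivRight fun a => by simp [T]).trans (Equiv.ofInjective x hx).symm)
  have he : ∀ a, x (e a) = T.orderEmbOfFin rfl a := fun a => by
    simp only [e, Equiv.trans_apply, Equiv.apply_ofInjective_symm,
      Equiv.subtypeEquivRight_apply_coe]
    rfl
  rw [← Matrix.det_submatrix_equiv_self e]
  simp only [detMinor, Matrix.submatrix, Matrix.of_apply, he]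

theorem determinantal_factorial_moments {n : ℕ} (K : Matrix (Fin n) (Fin n) ℂ)
    (p : PMF (Finset (Fin n))) (hp : IsDeterminantal K p)
    (m : ℕ) (E : Fin m → Finset (Fin n))
    (hE : Pairwise fun i j => Disjoint (E i) (E j)) :
    ∑ S : Finset (Fin n), ((p S).toReal : ℂ) * ∏ j, ((S ∩ E j).card : ℂ) =
      ∑ x ∈ Finset.univ.filter (fun x : Fin m → Fin n => ∀ j, x j ∈ E j),
        (Matrix.of fun i j : Fin m => K (x i) (x j)).det := by
  have hpi : univ.filter (fun x : Fin m → Fin n => ∀ j, x j ∈ E j) = Fintype.piFinset E := by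
    ext x
    simp
  calc ∑ S, ((p S).toReal : ℂ) * ∏ j, (#(S ∩ E j) : ℂ)
      = ∑ x ∈ Fintype.piFinset E, ∑ S with image x univ ⊆ S, ((p S).toReal : ℂ) :=
        sum_mul_prod_card_inter _ E
    _ = ∑ x ∈ Fintype.piFinset E, detMinor K (image x univ) := sum_congr rfl fun x _ => hp _
    _ = _ := by
        rw [hpi]
        exact sum_congr rfl fun x hx =>
          detMinor_image K (injective_of_mem_piFinset_of_pairwise_disjoint hE hx)
end

section
/- Necessity on a countable set: let K : ℕ → ℕ → ℂ satisfy K j i = conj (K i j) for all i j (Hermitian), and suppose there exists a probability measure μ on ℕ → Bool (with the product σ-algebra) such that for every S : Finset ℕ, μ {f | ∀ i ∈ S, f i = true} (as a real number, coerced to ℂ) equals the determinant of the S.card × S.card matrix whose (a,b) entry is K (S.orderEmbOfFin rfl a) (S.orderEmbOfFin rfl b). Then for every finitely supported x : ℕ → ℂ, 0 ≤ (∑ i, ∑ j, conj (x i) * K i j * x j).re and (∑ i, ∑ j, conj (x i) * K i j * x j).re ≤ ∑ i, ‖x i‖²; that is, K is a nonnegative contraction. -/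
open scoped ComplexConjugate

/-- Determinant of the principal submatrix of `K : ℕ → ℕ → ℂ` on the finset `S`. -/
noncomputable def detMinorNat (K : ℕ → ℕ → ℂ) (S : Finset ℕ) : ℂ :=
  (Matrix.of fun a b : Fin S.card =>
    K (S.orderEmbOfFin rfl a) (S.orderEmbOfFin rfl b)).det

namespace DetNecAux
open scoped ComplexOrder
open MeasureTheory


lemma det_enum_eq {ι : Type*} [LinearOrder ι] (K : ι → ι → ℂ) (T : Finset ι) {k : ℕ}
    (hk : T.card = k) (f : Fin k → ι) (hf : ∀ i, f i ∈ T) (hmono : StrictMono f) :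
    (Matrix.of fun a b : Fin T.card => K (T.orderEmbOfFin rfl a) (T.orderEmbOfFin rfl b)).det =
      (Matrix.of fun a b : Fin k => K (f a) (f b)).det := by
  subst hk
  have hfe : f = ⇑(T.orderEmbOfFin rfl) := Finset.orderEmbOfFin_unique rfl hf hmono
  rw [hfe]

noncomputable def pminor {m : ℕ} (A : Matrix (Fin m) (Fin m) ℂ) (s : Finset (Fin m)) : ℂ :=
  (A.submatrix (s.orderEmbOfFin rfl) (s.orderEmbOfFin rfl)).det

lemma pminor_empty {m : ℕ} (A : Matrix (Fin m) (Fin m) ℂ) :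
    pminor A (∅ : Finset (Fin m)) = 1 :=
  Matrix.det_fin_zero

lemma det_add_smul_one {m : ℕ} (A : Matrix (Fin m) (Fin m) ℂ) (t : ℂ) :
    (A + t • (1 : Matrix (Fin m) (Fin m) ℂ)).det =
      ∑ s : Finset (Fin m), t ^ (m - s.card) * pminor A s := by
  classical
  have h1 : (A + t • (1 : Matrix (Fin m) (Fin m) ℂ)).det =
      (Matrix.detRowAlternating : ((Fin m → ℂ) [⋀^Fin m]→ₗ[ℂ] ℂ)).toMultilinearMap
        ((fun i => A i) + (fun i => t • (Pi.single i (1:ℂ) : Fin m → ℂ))) := by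
    congr 1
    funext i j
    simp [Matrix.add_apply, Matrix.smul_apply, Matrix.one_apply, Pi.single_apply, eq_comm]
  rw [h1, MultilinearMap.map_add_univ]
  refine Finset.sum_congr rfl fun s _ => ?_
  set w : (i : Fin m) → (Fin m → ℂ) := fun i => (Pi.single i (1:ℂ) : Fin m → ℂ) with hw
  set base : (i : Fin m) → (Fin m → ℂ) := sᶜ.piecewise w (fun i => A i) with hbase
  have hps : s.piecewise (fun i => A i) (fun i => t • w i)
      = sᶜ.piecewise (fun i => t • base i) base := by
    funext i
    by_cases hi : i ∈ s
    · have hi' : i ∉ sᶜ := by simpa using hi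
      simp only [hbase, Finset.piecewise]
      simp [hi, hi']
    · have hi' : i ∈ sᶜ := by simpa using hi
      simp only [hbase, Finset.piecewise]
      simp [hi, hi']
  rw [hps, MultilinearMap.map_piecewise_smul]
  simp only [Finset.prod_const, Finset.card_compl, Fintype.card_fin, smul_eq_mul]
  congr 1
  -- now: detRowAlternating base = pminor A s
  have hbase' : base = s.piecewise (fun i => A i) w := by
    rw [hbase, Finset.piecewise_compl]
  let e2 : Fin sᶜ.card ≃ {i : Fin m // ¬ i ∈ s} :=
    (sᶜ.orderIsoOfFin rfl).toEquiv.trans (Equiv.subtypeEquivRight fun x => Finset.mem_compl)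
  let σ : Fin s.card ⊕ Fin sᶜ.card ≃ Fin m :=
    (Equiv.sumCongr (s.orderIsoOfFin rfl).toEquiv e2).trans (Equiv.sumCompl (· ∈ s))
  have hσl : ∀ a, σ (Sum.inl a) = s.orderEmbOfFin rfl a := fun a => by
    simp [σ, Equiv.sumCompl, Finset.coe_orderIsoOfFin_apply]
  have hσr : ∀ b, σ (Sum.inr b) = sᶜ.orderEmbOfFin rfl b := fun b => by
    simp [σ, e2, Equiv.sumCompl, Finset.coe_orderIsoOfFin_apply]
  have hmem : ∀ a, s.orderEmbOfFin rfl a ∈ s := fun a => Finset.orderEmbOfFin_mem s rfl a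
  have hmem' : ∀ b, (sᶜ.orderEmbOfFin rfl b) ∉ s := fun b => by
    have h2 := Finset.orderEmbOfFin_mem sᶜ rfl b
    rw [Finset.mem_compl] at h2
    exact h2
  have hblock : (Matrix.of base).submatrix σ σ =
      Matrix.fromBlocks (A.submatrix (s.orderEmbOfFin rfl) (s.orderEmbOfFin rfl))
        (A.submatrix (s.orderEmbOfFin rfl) (sᶜ.orderEmbOfFin rfl)) 0 1 := by
    ext i j
    rcases i with a | a <;> rcases j with b | b <;>
      simp only [Matrix.submatrix_apply, Matrix.of_apply, hσl, hσr, hbase',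
        Matrix.fromBlocks_apply₁₁, Matrix.fromBlocks_apply₁₂, Matrix.fromBlocks_apply₂₁,
        Matrix.fromBlocks_apply₂₂]
    · rw [Finset.piecewise_eq_of_mem _ _ _ (hmem a)]
    · rw [Finset.piecewise_eq_of_mem _ _ _ (hmem a)]
    · rw [Finset.piecewise_eq_of_notMem _ _ _ (hmem' a)]
      have hne : s.orderEmbOfFin rfl b ≠ sᶜ.orderEmbOfFin rfl a := fun hcontra => by
        exact hmem' a (hcontra ▸ hmem b)
      simp [hw, Pi.single_apply, hne, Matrix.zero_apply]
    · rw [Finset.piecewise_eq_of_notMem _ _ _ (hmem' a)]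
      have : (sᶜ.orderEmbOfFin rfl b = sᶜ.orderEmbOfFin rfl a) ↔ b = a :=
        ⟨fun h => (sᶜ.orderEmbOfFin rfl).injective h, fun h => by rw [h]⟩
      simp [hw, Pi.single_apply, this, Matrix.one_apply, eq_comm]
  have hfinal : Matrix.det (Matrix.of base) = pminor A s := by
    rw [← Matrix.det_submatrix_equiv_self σ (Matrix.of base), hblock,
      Matrix.det_fromBlocks_zero₂₁, Matrix.det_one, mul_one]
    rfl
  exact hfinal


open scoped ComplexOrder

lemma det_add_eq_prod_eig {m : ℕ} {A : Matrix (Fin m) (Fin m) ℂ} (hA : A.IsHermitian) (t : ℂ) :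
    (A + t • (1 : Matrix (Fin m) (Fin m) ℂ)).det = ∏ i, ((hA.eigenvalues i : ℂ) + t) := by
  set U : Matrix (Fin m) (Fin m) ℂ :=
    (Matrix.IsHermitian.eigenvectorUnitary hA : Matrix (Fin m) (Fin m) ℂ) with hUdef
  have hU : U * star U = 1 :=
    Matrix.mem_unitaryGroup_iff.mp (Matrix.IsHermitian.eigenvectorUnitary hA).2
  have h2 : U * (Matrix.diagonal (RCLike.ofReal ∘ hA.eigenvalues) + t • 1) * star U
      = A + t • (1 : Matrix (Fin m) (Fin m) ℂ) := by
    rw [Matrix.mul_add, Matrix.add_mul, Matrix.mul_smul, mul_one, Matrix.smul_mul, hU]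
    conv_rhs => rw [hA.spectral_theorem, Unitary.conjStarAlgAut_apply]
  have h3 : Matrix.diagonal (RCLike.ofReal ∘ hA.eigenvalues) + t • (1 : Matrix (Fin m) (Fin m) ℂ)
      = Matrix.diagonal (fun i => (hA.eigenvalues i : ℂ) + t) := by
    rw [Matrix.smul_one_eq_diagonal, Matrix.diagonal_add]
    rfl
  rw [← h2, h3, Matrix.det_mul, Matrix.det_mul, mul_right_comm, ← Matrix.det_mul, hU,
    Matrix.det_one, one_mul, Matrix.det_diagonal]

lemma posSemidef_of_minors_nonneg {m : ℕ} {A : Matrix (Fin m) (Fin m) ℂ} (hA : A.IsHermitian)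
    (h : ∀ s : Finset (Fin m), ∃ r : ℝ, 0 ≤ r ∧ pminor A s = (r : ℂ)) : A.PosSemidef := by
  classical
  choose r hr0 hrc using h
  apply hA.posSemidef_iff_eigenvalues_nonneg.mpr
  intro i
  by_contra hneg
  push_neg at hneg
  rw [Pi.zero_apply] at hneg
  set t : ℝ := -hA.eigenvalues i with ht
  have htpos : 0 < t := by simp [ht]; linarith
  have key := det_add_smul_one A ((t : ℝ) : ℂ)
  rw [det_add_eq_prod_eig hA] at key
  have h0 : (∏ j, ((hA.eigenvalues j : ℂ) + ((t : ℝ) : ℂ))) = 0 :=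
    Finset.prod_eq_zero (Finset.mem_univ i) (by rw [ht]; push_cast; ring)
  rw [h0] at key
  have hre : ((∑ s : Finset (Fin m), t ^ (m - s.card) * r s : ℝ) : ℂ) = 0 := by
    push_cast
    simp_rw [← hrc]
    exact key.symm
  have hr1 : r (∅ : Finset (Fin m)) = 1 := by
    have := hrc (∅ : Finset (Fin m))
    rw [pminor_empty] at this
    exact_mod_cast this.symm
  have hpos : 0 < ∑ s : Finset (Fin m), t ^ (m - s.card) * r s := by
    have hterm : ∀ s ∈ (Finset.univ : Finset (Finset (Fin m))),
        0 ≤ t ^ (m - s.card) * r s :=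
      fun s _ => mul_nonneg (pow_nonneg htpos.le _) (hr0 s)
    have hzero : 0 < t ^ (m - (∅ : Finset (Fin m)).card) * r (∅ : Finset (Fin m)) := by
      rw [hr1, mul_one]
      exact pow_pos htpos _
    calc (0:ℝ) < t ^ (m - (∅ : Finset (Fin m)).card) * r (∅ : Finset (Fin m)) := hzero
      _ ≤ _ := Finset.single_le_sum hterm (Finset.mem_univ _)
  rw [Complex.ofReal_eq_zero] at hre
  exact hpos.ne' hre

open MeasureTheory

lemma ie_nonneg (μ : Measure (ℕ → Bool)) [IsProbabilityMeasure μ]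
    {k : ℕ} (g : Fin k ↪ ℕ) :
    0 ≤ ∑ u : Finset (Fin k), (-1 : ℝ) ^ u.card *
      (μ {f : ℕ → Bool | ∀ i ∈ u.map g, f i = true}).toReal := by
  classical
  have hmeas : ∀ D : Finset ℕ, MeasurableSet {f : ℕ → Bool | ∀ i ∈ D, f i = true} := by
    intro D
    have hset : {f : ℕ → Bool | ∀ i ∈ D, f i = true}
        = ⋂ i ∈ (D : Set ℕ), (fun f : ℕ → Bool => f i) ⁻¹' {true} := by
      ext f; simp
    rw [hset]
    exact MeasurableSet.biInter D.countable_toSet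
      (fun i _ => (measurable_pi_apply i) (measurableSet_singleton true))
  set G : Finset (Fin k) → (ℕ → Bool) → ℝ :=
    fun u f => ∏ i ∈ u, (if f (g i) = true then (1:ℝ) else 0) with hG
  have hind : ∀ u : Finset (Fin k),
      G u = Set.indicator {f : ℕ → Bool | ∀ i ∈ u.map g, f i = true} (fun _ => (1:ℝ)) := by
    intro u; funext f
    by_cases hf : ∀ i ∈ u, f (g i) = true
    · rw [Set.indicator_of_mem]
      · exact Finset.prod_eq_one fun i hi => by simp [hf i hi]
      · intro j hj
        simp only [Finset.mem_map] at hj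
        obtain ⟨i, hi, rfl⟩ := hj
        exact hf i hi
    · push_neg at hf; obtain ⟨i, hi, hfi⟩ := hf
      rw [Set.indicator_of_notMem]
      · exact Finset.prod_eq_zero hi (by simp [hfi])
      · intro hc
        exact hfi (hc (g i) (Finset.mem_map_of_mem g hi))
  have hint : ∀ u : Finset (Fin k), Integrable (G u) μ := by
    intro u; rw [hind u]
    exact (integrable_const (1:ℝ)).indicator (hmeas _)
  have hval : ∀ u : Finset (Fin k),
      ∫ f, G u f ∂μ = (μ {f : ℕ → Bool | ∀ i ∈ u.map g, f i = true}).toReal := by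
    intro u
    rw [show (fun f => G u f) = G u from rfl, hind u, integral_indicator_const _ (hmeas _)]
    simp
    rfl
  have hexpand : ∀ f : ℕ → Bool,
      ∏ i : Fin k, (1 - (if f (g i) = true then (1:ℝ) else 0))
        = ∑ u : Finset (Fin k), (-1:ℝ)^u.card * G u f := by
    intro f
    have hpa := Finset.prod_add (fun i : Fin k => -(if f (g i) = true then (1:ℝ) else 0))
      (fun _ => (1:ℝ)) Finset.univ
    simp only [Finset.prod_const_one, mul_one, Finset.powerset_univ] at hpa
    calc ∏ i : Fin k, (1 - (if f (g i) = true then (1:ℝ) else 0))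
        = ∏ i : Fin k, (-(if f (g i) = true then (1:ℝ) else 0) + 1) := by
          exact Finset.prod_congr rfl fun i _ => by ring
      _ = ∑ u : Finset (Fin k), ∏ i ∈ u, -(if f (g i) = true then (1:ℝ) else 0) := hpa
      _ = ∑ u : Finset (Fin k), (-1:ℝ)^u.card * G u f := by
          refine Finset.sum_congr rfl fun u _ => ?_
          rw [hG]
          simp only
          rw [show (fun i => -(if f (g i) = true then (1:ℝ) else 0))
              = (fun i => (-1 : ℝ) * (if f (g i) = true then (1:ℝ) else 0)) from
            funext fun i => by ring]
          rw [Finset.prod_mul_distrib, Finset.prod_const]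
  have h0 : 0 ≤ ∫ f, ∏ i : Fin k, (1 - (if f (g i) = true then (1:ℝ) else 0)) ∂μ :=
    integral_nonneg fun f =>
      Finset.prod_nonneg fun i _ => by by_cases hb : f (g i) = true <;> simp [hb]
  rw [show (fun f : ℕ → Bool => ∏ i : Fin k, (1 - (if f (g i) = true then (1:ℝ) else 0)))
      = (fun f : ℕ → Bool => ∑ u : Finset (Fin k), (-1:ℝ)^u.card * G u f) from
    funext hexpand] at h0
  rw [integral_finset_sum _ (fun u _ => (hint u).const_mul _)] at h0
  simp_rw [integral_const_mul, hval] at h0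
  exact h0

open MeasureTheory Matrix in
theorem main_result (K : ℕ → ℕ → ℂ)
    (hherm : ∀ i j, K j i = conj (K i j))
    (h : ∃ μ : MeasureTheory.Measure (ℕ → Bool), MeasureTheory.IsProbabilityMeasure μ ∧
      ∀ S : Finset ℕ,
        ((μ {f : ℕ → Bool | ∀ i ∈ S, f i = true}).toReal : ℂ) = detMinorNat K S) :
    ∀ x : ℕ →₀ ℂ,
      0 ≤ (∑ i ∈ x.support, ∑ j ∈ x.support, conj (x i) * K i j * x j).re ∧
      (∑ i ∈ x.support, ∑ j ∈ x.support, conj (x i) * K i j * x j).re ≤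
        ∑ i ∈ x.support, ‖x i‖ ^ 2 := by
  classical
  obtain ⟨μ, hprob, hcorr⟩ := h
  haveI := hprob
  intro x
  set S : Finset ℕ := x.support with hSdef
  set n : ℕ := S.card with hndef
  set E : Fin n ↪o ℕ := S.orderEmbOfFin rfl with hEdef
  set M : Matrix (Fin n) (Fin n) ℂ := Matrix.of fun a b : Fin n => K (E a) (E b) with hMdef
  set P : Finset ℕ → ℝ := fun T => (μ {f : ℕ → Bool | ∀ i ∈ T, f i = true}).toReal with hPdef
  have hP0 : ∀ T, 0 ≤ P T := fun T => ENNReal.toReal_nonneg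
  have hPK : ∀ T : Finset ℕ, (P T : ℂ) = detMinorNat K T := hcorr
  -- M is Hermitian
  have hMh : M.IsHermitian := by
    refine Matrix.IsHermitian.ext fun a b => ?_
    show star (K (E b) (E a)) = K (E a) (E b)
    rw [hherm (E a) (E b), RCLike.star_def, Complex.conj_conj]
  -- principal minors of M
  have hm1 : ∀ s : Finset (Fin n), pminor M s = (P (s.map E.toEmbedding) : ℂ) := by
    intro s
    rw [hPK]
    refine ((det_enum_eq K (s.map E.toEmbedding) (Finset.card_map _)
      (fun a => E (s.orderEmbOfFin rfl a))
      (fun a => Finset.mem_map_of_mem _ (Finset.orderEmbOfFin_mem s rfl a))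
      (E.strictMono.comp (s.orderEmbOfFin rfl).strictMono)).symm)
  -- nested minors
  have hm2 : ∀ (s : Finset (Fin n)) (u : Finset (Fin s.card)),
      pminor (M.submatrix (s.orderEmbOfFin rfl) (s.orderEmbOfFin rfl)) u
        = pminor M (u.map (s.orderEmbOfFin rfl).toEmbedding) := by
    intro s u
    exact (det_enum_eq (fun a b => M a b) (u.map (s.orderEmbOfFin rfl).toEmbedding)
      (Finset.card_map _)
      (fun a => s.orderEmbOfFin rfl (u.orderEmbOfFin rfl a))
      (fun a => Finset.mem_map_of_mem _ (Finset.orderEmbOfFin_mem u rfl a))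
      ((s.orderEmbOfFin rfl).strictMono.comp (u.orderEmbOfFin rfl).strictMono)).symm
  have hpsdM : M.PosSemidef :=
    posSemidef_of_minors_nonneg hMh fun s => ⟨P (s.map E.toEmbedding), hP0 _, hm1 s⟩
  -- 1 - M
  have h1Mh : (1 - M).IsHermitian := Matrix.isHermitian_one.sub hMh
  have hpsd1M : (1 - M).PosSemidef := by
    refine posSemidef_of_minors_nonneg h1Mh fun s => ?_
    set oEs := s.orderEmbOfFin rfl with hoEs
    have hsub1 : (1 - M).submatrix oEs oEs = -(M.submatrix oEs oEs) + (1:ℂ) • 1 := by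
      ext a b
      simp only [Matrix.submatrix_apply, Matrix.sub_apply, Matrix.neg_apply, Matrix.add_apply,
        Matrix.smul_apply, Matrix.one_apply, smul_eq_mul, mul_one,
        EmbeddingLike.apply_eq_iff_eq]
      ring_nf
    have hps : pminor (1 - M) s
        = ∑ u : Finset (Fin s.card), (-1:ℂ)^u.card * pminor M (u.map oEs.toEmbedding) := by
      rw [pminor, hsub1, det_add_smul_one]
      refine Finset.sum_congr rfl fun u _ => ?_
      rw [one_pow, one_mul]
      have hneg : pminor (-(M.submatrix oEs oEs)) u
          = (-1:ℂ)^u.card * pminor (M.submatrix oEs oEs) u := by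
        rw [pminor, pminor]
        have : (-(M.submatrix oEs oEs)).submatrix (u.orderEmbOfFin rfl) (u.orderEmbOfFin rfl)
            = -((M.submatrix oEs oEs).submatrix (u.orderEmbOfFin rfl) (u.orderEmbOfFin rfl)) := by
          ext a b; simp
        rw [this, Matrix.det_neg, Fintype.card_fin]
      rw [hneg, hm2 s u]
    have hcast : pminor (1 - M) s
        = ((∑ u : Finset (Fin s.card), (-1:ℝ)^u.card * P ((u.map oEs.toEmbedding).map E.toEmbedding) : ℝ) : ℂ) := by
      rw [hps]
      push_cast
      refine Finset.sum_congr rfl fun u _ => ?_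
      rw [hm1]
    refine ⟨_, ?_, hcast⟩
    have := ie_nonneg μ (g := oEs.toEmbedding.trans E.toEmbedding)
    simp_rw [← Finset.map_map] at this
    exact this
  -- the quadratic form
  set v : Fin n → ℂ := fun a => x (E a) with hvdef
  have hSmap : S = Finset.univ.map E.toEmbedding := by
    ext j
    simp only [Finset.mem_map, Finset.mem_univ, true_and, RelEmbedding.coe_toEmbedding]
    constructor
    · intro hj
      have : j ∈ Set.range ⇑E := by
        rw [hEdef, Finset.range_orderEmbOfFin]; exact hj
      exact this
    · rintro ⟨a, rfl⟩
      exact Finset.orderEmbOfFin_mem S rfl a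
  have hq : ∑ i ∈ S, ∑ j ∈ S, conj (x i) * K i j * x j
      = dotProduct (star v) (M *ᵥ v) := by
    rw [hSmap]
    rw [Finset.sum_map]
    simp only [RelEmbedding.coe_toEmbedding]
    rw [dotProduct]
    refine Finset.sum_congr rfl fun a _ => ?_
    rw [Finset.sum_map]
    simp only [RelEmbedding.coe_toEmbedding, Matrix.mulVec, dotProduct, Pi.star_apply,
      hvdef, hMdef, Matrix.of_apply, Finset.mul_sum]
    refine Finset.sum_congr rfl fun b _ => ?_
    rw [Complex.star_def]
    ring
  have hqv : ∑ i ∈ S, ‖x i‖ ^ 2 = (dotProduct (star v) v).re := by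
    rw [hSmap, Finset.sum_map, dotProduct, Complex.re_sum]
    refine Finset.sum_congr rfl fun a _ => ?_
    simp only [RelEmbedding.coe_toEmbedding, Pi.star_apply, hvdef, Complex.star_def]
    rw [mul_comm, Complex.mul_conj]
    simp [Complex.sq_norm]
  constructor
  · rw [hq]
    have := hpsdM.dotProduct_mulVec_nonneg v
    have h2 := (Complex.le_def.mp this).1
    simpa using h2
  · rw [hq, hqv]
    have := hpsd1M.dotProduct_mulVec_nonneg v
    rw [Matrix.sub_mulVec, Matrix.one_mulVec, dotProduct_sub] at this
    have h2 := (Complex.le_def.mp this).1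
    simp only [Complex.zero_re, Complex.sub_re] at h2
    linarith

end DetNecAux

theorem determinantal_necessary_countable (K : ℕ → ℕ → ℂ)
    (hherm : ∀ i j, K j i = conj (K i j))
    (h : ∃ μ : MeasureTheory.Measure (ℕ → Bool), MeasureTheory.IsProbabilityMeasure μ ∧
      ∀ S : Finset ℕ,
        ((μ {f : ℕ → Bool | ∀ i ∈ S, f i = true}).toReal : ℂ) = detMinorNat K S) :
    ∀ x : ℕ →₀ ℂ,
      0 ≤ (∑ i ∈ x.support, ∑ j ∈ x.support, conj (x i) * K i j * x j).re ∧
      (∑ i ∈ x.support, ∑ j ∈ x.support, conj (x i) * K i j * x j).re ≤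
        ∑ i ∈ x.support, ‖x i‖ ^ 2 :=
  DetNecAux.main_result K hherm h
end
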